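/- arXiv:0811.4163 — 7 statements merged into one kernel-verified Lean document; each statement's English description precedes it below -/
import Mathlib

section
/- For all prime powers q and positive integers n, the total number of subspaces of GF(q)^n satisfies q^{⌊n/2⌋(n-⌊n/2⌋)} ≤ |E(q,n)| < 2 K_q^{-1} θ(q) q^{⌊n/2⌋(n-⌊n/2⌋)}, where θ(q) = ∑_{m=0}^∞ q^{-m²}. -/
/-- `K_q = ∏_{j=1}^∞ (1 - q^{-j})`. -/
noncomputable def Kq (q : ℕ) : ℝ := ∏' j : ℕ, (1 - ((q : ℝ))⁻¹ ^ (j + 1))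

/-- `θ(q) = ∑_{m=0}^∞ q^{-m²}`. -/
noncomputable def theta (q : ℕ) : ℝ := ∑' m : ℕ, ((q : ℝ))⁻¹ ^ (m * m)

/-!
Lower bound: the graphs of the linear maps `F^m → F^(n-m)` are `q^(m(n-m))` distinct subspaces.

Upper bound: a `k`-dimensional subspace has `∏_{i<k} (q^k - q^i) = q^(k²) ∏_{j=1}^k (1 - q^(-j))
≥ q^(k²) K_q` ordered bases, and ordered bases of different subspaces are different `k`-tuples of
vectors of `F^n`, so there are at most `q^(k(n-k)) / K_q` such subspaces. With `m = ⌊n/2⌋`, the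
exponent `k(n-k)` falls short of `m(n-m)` by at least `(m-k)²` for `k ≤ m` and by at least
`(k-m-1)²` for `k > m`, so `∑_k q^(k(n-k))` is less than `q^(m(n-m))` times two partial sums
of `θ(q)`.
-/

open Finset Real Module

section Series

variable {x : ℝ}

lemma summable_pow_mul_self (hx0 : 0 ≤ x) (hx1 : x < 1) : Summable fun m : ℕ => x ^ (m * m) :=
  (summable_geometric_of_lt_one hx0 hx1).of_nonneg_of_le (fun _ => by positivity)
    fun m => pow_le_pow_of_le_one hx0 hx1.le (Nat.le_mul_self m)

lemma summable_log_one_sub_pow_succ (hx0 : 0 ≤ x) (hx1 : x < 1) :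
    Summable fun j : ℕ => log (1 - x ^ (j + 1)) := by
  simpa [sub_eq_add_neg, pow_succ] using
    summable_log_one_add_of_summable ((summable_geometric_of_lt_one hx0 hx1).mul_right x).neg

lemma one_sub_pow_succ_pos (hx0 : 0 ≤ x) (hx1 : x < 1) (j : ℕ) : 0 < 1 - x ^ (j + 1) :=
  sub_pos.2 (pow_lt_one₀ hx0 hx1 j.succ_ne_zero)

lemma pow_le_pow_mul_inv_pow (hx : 1 ≤ x) {a b c : ℕ} (h : a + c ≤ b) :
    x ^ a ≤ x ^ b * x⁻¹ ^ c := by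
  rw [inv_pow, ← div_eq_mul_inv, le_div_iff₀ (by positivity), ← pow_add]
  exact pow_le_pow_right₀ hx h

end Series

section Constants

variable {q : ℕ}

lemma inv_natCast_lt_one (hq : 1 < q) : (q : ℝ)⁻¹ < 1 :=
  inv_lt_one_of_one_lt₀ (by exact_mod_cast hq)

lemma sum_range_lt_theta (hq : 1 < q) (t : ℕ) :
    ∑ m ∈ range t, (q : ℝ)⁻¹ ^ (m * m) < theta q :=
  calc ∑ m ∈ range t, (q : ℝ)⁻¹ ^ (m * m)
      < ∑ m ∈ range (t + 1), (q : ℝ)⁻¹ ^ (m * m) := by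
        rw [sum_range_succ]; exact lt_add_of_pos_right _ (by positivity)
    _ ≤ theta q := (summable_pow_mul_self (by positivity) (inv_natCast_lt_one hq)).sum_le_tsum _
        fun _ _ => by positivity

lemma Kq_eq_exp_tsum_log (hq : 1 < q) :
    Kq q = exp (∑' j : ℕ, log (1 - (q : ℝ)⁻¹ ^ (j + 1))) :=
  (rexp_tsum_eq_tprod (one_sub_pow_succ_pos (by positivity) (inv_natCast_lt_one hq))
    (summable_log_one_sub_pow_succ (by positivity) (inv_natCast_lt_one hq))).symm

lemma Kq_pos (hq : 1 < q) : 0 < Kq q :=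
  Kq_eq_exp_tsum_log hq ▸ exp_pos _

lemma Kq_le_prod_range (hq : 1 < q) (k : ℕ) :
    Kq q ≤ ∏ j ∈ range k, (1 - (q : ℝ)⁻¹ ^ (j + 1)) := by
  have hpos := one_sub_pow_succ_pos (by positivity) (inv_natCast_lt_one hq)
  have hlog := summable_log_one_sub_pow_succ (by positivity) (inv_natCast_lt_one hq)
  rw [Kq_eq_exp_tsum_log hq, ← exp_log (prod_pos fun j _ => hpos j),
    log_prod fun j _ => (hpos j).ne', exp_le_exp, ← neg_le_neg_iff, ← tsum_neg, ← sum_neg_distrib]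
  exact hlog.neg.sum_le_tsum _ fun j _ =>
    neg_nonneg.2 (log_nonpos (hpos j).le (sub_le_self _ (by positivity)))

end Constants

section Exponents

lemma mul_sub_add_sq_le_of_le_half {n k : ℕ} (hk : k ≤ n / 2) :
    k * (n - k) + (n / 2 - k) * (n / 2 - k) ≤ n / 2 * (n - n / 2) := by
  obtain ⟨m, r, hr, rfl⟩ : ∃ m r, r ≤ 1 ∧ n = 2 * m + r := ⟨n / 2, n % 2, by omega, by omega⟩
  rw [show (2 * m + r) / 2 = m by omega] at hk ⊢
  obtain ⟨d, rfl⟩ : ∃ d, m = k + d := ⟨m - k, by omega⟩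
  rw [show k + d - k = d by omega, show 2 * (k + d) + r - k = k + 2 * d + r by omega,
    show 2 * (k + d) + r - (k + d) = k + d + r by omega]
  nlinarith

lemma mul_sub_add_sq_le_of_half_lt {n k : ℕ} (hk : n / 2 < k) (hkn : k ≤ n) :
    k * (n - k) + (k - n / 2 - 1) * (k - n / 2 - 1) ≤ n / 2 * (n - n / 2) := by
  obtain ⟨m, r, hr, rfl⟩ : ∃ m r, r ≤ 1 ∧ n = 2 * m + r := ⟨n / 2, n % 2, by omega, by omega⟩
  rw [show (2 * m + r) / 2 = m by omega] at hk ⊢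
  obtain ⟨e, s, rfl, hs⟩ : ∃ e s, k = m + 1 + e ∧ m + r = e + 1 + s :=
    ⟨k - m - 1, 2 * m + r - k, by omega, by omega⟩
  rw [show m + 1 + e - m - 1 = e by omega, show 2 * m + r - (m + 1 + e) = s by omega,
    show 2 * m + r - m = e + 1 + s by omega]
  nlinarith

lemma sum_pow_mul_sub_lt {q : ℕ} (hq : 1 < q) (n : ℕ) :
    ∑ k ∈ range (n + 1), (q : ℝ) ^ (k * (n - k)) <
      2 * theta q * (q : ℝ) ^ (n / 2 * (n - n / 2)) := by
  set m := n / 2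
  set Q := (q : ℝ) ^ (m * (n - m))
  have hq1 : (1 : ℝ) ≤ q := by exact_mod_cast hq.le
  have hlow : ∑ k ∈ range (m + 1), (q : ℝ) ^ (k * (n - k))
      ≤ Q * ∑ d ∈ range (m + 1), (q : ℝ)⁻¹ ^ (d * d) := by
    rw [← sum_range_reflect (fun d => (q : ℝ)⁻¹ ^ (d * d)), mul_sum]
    refine sum_le_sum fun k hk => ?_
    rw [show m + 1 - 1 - k = m - k by omega]
    exact pow_le_pow_mul_inv_pow hq1
      (mul_sub_add_sq_le_of_le_half (Nat.lt_succ_iff.1 (mem_range.1 hk)))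
  have hhigh : ∑ e ∈ range (n - m), (q : ℝ) ^ ((m + 1 + e) * (n - (m + 1 + e)))
      ≤ Q * ∑ e ∈ range (n - m), (q : ℝ)⁻¹ ^ (e * e) := by
    rw [mul_sum]
    refine sum_le_sum fun e he => ?_
    have h := mul_sub_add_sq_le_of_half_lt (n := n) (k := m + 1 + e) (by omega)
      (by have := mem_range.1 he; omega)
    rw [show m + 1 + e - n / 2 - 1 = e by omega] at h
    exact pow_le_pow_mul_inv_pow hq1 h
  calc ∑ k ∈ range (n + 1), (q : ℝ) ^ (k * (n - k))
      = ∑ k ∈ range (m + 1), (q : ℝ) ^ (k * (n - k))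
        + ∑ e ∈ range (n - m), (q : ℝ) ^ ((m + 1 + e) * (n - (m + 1 + e))) := by
        rw [← sum_range_add, show m + 1 + (n - m) = n + 1 by omega]
    _ ≤ Q * ∑ d ∈ range (m + 1), (q : ℝ)⁻¹ ^ (d * d)
        + Q * ∑ e ∈ range (n - m), (q : ℝ)⁻¹ ^ (e * e) := add_le_add hlow hhigh
    _ < Q * theta q + Q * theta q := by
        gcongr <;> exact sum_range_lt_theta hq _
    _ = 2 * theta q * Q := by ring

end Exponents

lemma prod_range_pow_sub_pow {K : Type*} [Field K] {y : K} (hy : y ≠ 0) (k : ℕ) :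
    ∏ i ∈ range k, (y ^ k - y ^ i) = y ^ (k * k) * ∏ j ∈ range k, (1 - y⁻¹ ^ (j + 1)) := by
  have h : ∀ i ∈ range k, y ^ k - y ^ i = y ^ k * (1 - y⁻¹ ^ (k - 1 - i + 1)) := fun i hi => by
    rw [show k - 1 - i + 1 = k - i by have := mem_range.1 hi; omega, mul_sub, mul_one,
      ← pow_mul_pow_sub y (mem_range.1 hi).le, mul_assoc, inv_pow,
      mul_inv_cancel₀ (pow_ne_zero _ hy), mul_one]
  rw [prod_congr rfl h, prod_mul_distrib, prod_const, card_range, ← pow_mul,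
    prod_range_reflect (fun j => 1 - y⁻¹ ^ (j + 1))]

lemma card_linearMap_le_card_submodule_prod {R : Type*} (U W : Type*) [Semiring R]
    [AddCommMonoid U] [Module R U] [AddCommMonoid W] [Module R W] [Finite U] [Finite W] :
    Nat.card (U →ₗ[R] W) ≤ Nat.card (Submodule R (U × W)) :=
  Nat.card_le_card_of_injective LinearMap.graph fun A _ h => LinearMap.ext fun x =>
    (LinearMap.mem_graph_iff _ _).1 (h ▸ (LinearMap.mem_graph_iff A (x, A x)).2 rfl)

lemma span_range_subtype_eq_of_linearIndependent {F V : Type*} [Field F] [AddCommGroup V]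
    [Module F V] [FiniteDimensional F V] {W : Submodule F V} {k : ℕ} (hW : finrank F W = k)
    {s : Fin k → W} (hs : LinearIndependent F s) :
    Submodule.span F (Set.range (W.subtype ∘ s)) = W := by
  rw [Set.range_comp, Submodule.span_image,
    hs.span_eq_top_of_card_eq_finrank' (by simp [hW]), Submodule.map_subtype_top]

section Subspaces

variable {F V : Type*} [Field F] [AddCommGroup V] [Module F V] [Finite V]

lemma card_submodule_eq_sum_card_finrank_eq :
    Nat.card (Submodule F V) =
      ∑ k ∈ range (finrank F V + 1), Nat.card {W : Submodule F V // finrank F W = k} := by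
  classical
  have := Fintype.ofFinite (Submodule F V)
  rw [Nat.card_eq_fintype_card, ← card_univ,
    card_eq_sum_card_fiberwise (f := fun W : Submodule F V => finrank F W)
      fun W _ => mem_range.2 (Nat.lt_succ_of_le (Submodule.finrank_le W))]
  simp [Nat.card_eq_fintype_card, Fintype.card_subtype]

variable [Fintype F]

lemma pow_le_card_submodule {m : ℕ} (hm : m ≤ finrank F V) :
    Fintype.card F ^ (m * (finrank F V - m)) ≤ Nat.card (Submodule F V) := by
  let e : ((Fin m → F) × (Fin (finrank F V - m) → F)) ≃ₗ[F] V :=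
    LinearEquiv.ofFinrankEq _ _ (by simp; omega)
  calc Fintype.card F ^ (m * (finrank F V - m))
      = Nat.card ((Fin m → F) →ₗ[F] (Fin (finrank F V - m) → F)) := by
        rw [natCard_eq_pow_finrank (K := F), finrank_linearMap, Nat.card_eq_fintype_card]; simp
    _ ≤ Nat.card (Submodule F ((Fin m → F) × (Fin (finrank F V - m) → F))) :=
        card_linearMap_le_card_submodule_prod _ _
    _ = Nat.card (Submodule F V) := Nat.card_congr (Submodule.orderIsoMapComap e).toEquiv

lemma card_finrank_eq_mul_le (k : ℕ) :
    Nat.card {W : Submodule F V // finrank F W = k} *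
        ∏ i : Fin k, (Fintype.card F ^ k - Fintype.card F ^ (i : ℕ)) ≤
      Fintype.card F ^ (finrank F V * k) := by
  have := Fintype.ofFinite {W : Submodule F V // finrank F W = k}
  have hinj : Function.Injective fun p : Σ W : {W : Submodule F V // finrank F W = k},
      {s : Fin k → W.1 // LinearIndependent F s} => p.1.1.subtype ∘ p.2.1 := by
    rintro ⟨⟨W₁, h₁⟩, s₁, hs₁⟩ ⟨⟨W₂, h₂⟩, s₂, hs₂⟩ h
    obtain rfl : W₁ = W₂ := by
      rw [← span_range_subtype_eq_of_linearIndependent h₁ hs₁,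
        ← span_range_subtype_eq_of_linearIndependent h₂ hs₂]
      exact congrArg (fun f => Submodule.span F (Set.range f)) h
    obtain rfl : s₁ = s₂ := funext fun i => Subtype.ext (congrFun h i)
    rfl
  calc _ = Nat.card (Σ W : {W : Submodule F V // finrank F W = k},
        {s : Fin k → W.1 // LinearIndependent F s}) := by
        rw [Nat.card_sigma, sum_congr rfl fun W _ => by rw [card_linearIndependent W.2.ge, W.2],
          sum_const, card_univ, smul_eq_mul, Nat.card_eq_fintype_card]
    _ ≤ Nat.card (Fin k → V) := Nat.card_le_card_of_injective _ hinj
    _ = _ := by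
        rw [Nat.card_fun, natCard_eq_pow_finrank (K := F), Nat.card_eq_fintype_card]
        simp [pow_mul]

lemma card_finrank_eq_le {k : ℕ} (hk : k ≤ finrank F V) :
    (Nat.card {W : Submodule F V // finrank F W = k} : ℝ) ≤
      (Kq (Fintype.card F))⁻¹ * (Fintype.card F : ℝ) ^ (k * (finrank F V - k)) := by
  set q := Fintype.card F
  have hq : 1 < q := Fintype.one_lt_card
  have hbases : (q : ℝ) ^ (k * k) * Kq q ≤ ((∏ i : Fin k, (q ^ k - q ^ (i : ℕ)) : ℕ) : ℝ) := by
    rw [Fin.prod_univ_eq_prod_range (fun i => q ^ k - q ^ i), Nat.cast_prod,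
      prod_congr rfl fun i hi => Nat.cast_sub (Nat.pow_le_pow_right hq.le (mem_range.1 hi).le)]
    push_cast
    rw [prod_range_pow_sub_pow (by positivity)]
    exact mul_le_mul_of_nonneg_left (Kq_le_prod_range hq k) (by positivity)
  have hcount : (Nat.card {W : Submodule F V // finrank F W = k} : ℝ) * ((q : ℝ) ^ (k * k) * Kq q)
      ≤ (q : ℝ) ^ (k * (finrank F V - k)) * (q : ℝ) ^ (k * k) := by
    rw [← pow_add, show k * (finrank F V - k) + k * k = finrank F V * k by
      rw [← mul_add, Nat.sub_add_cancel hk, mul_comm]]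
    exact (mul_le_mul_of_nonneg_left hbases (Nat.cast_nonneg _)).trans
      (by exact_mod_cast card_finrank_eq_mul_le k)
  have hpos : 0 < (q : ℝ) ^ (k * k) := by positivity
  rw [inv_mul_eq_div, le_div_iff₀ (Kq_pos hq)]
  nlinarith

lemma card_submodule_lt :
    (Nat.card (Submodule F V) : ℝ) < 2 * (Kq (Fintype.card F))⁻¹ * theta (Fintype.card F) *
      (Fintype.card F : ℝ) ^ (finrank F V / 2 * (finrank F V - finrank F V / 2)) := by
  set q := Fintype.card F
  set n := finrank F V
  have hq : 1 < q := Fintype.one_lt_card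
  calc (Nat.card (Submodule F V) : ℝ)
      = ∑ k ∈ range (n + 1), (Nat.card {W : Submodule F V // finrank F W = k} : ℝ) := by
        exact_mod_cast card_submodule_eq_sum_card_finrank_eq
    _ ≤ ∑ k ∈ range (n + 1), (Kq q)⁻¹ * (q : ℝ) ^ (k * (n - k)) :=
        sum_le_sum fun k hk => card_finrank_eq_le (Nat.lt_succ_iff.1 (mem_range.1 hk))
    _ = (Kq q)⁻¹ * ∑ k ∈ range (n + 1), (q : ℝ) ^ (k * (n - k)) := (mul_sum _ _ _).symm
    _ < (Kq q)⁻¹ * (2 * theta q * (q : ℝ) ^ (n / 2 * (n - n / 2))) :=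
        mul_lt_mul_of_pos_left (sum_pow_mul_sub_lt hq n) (inv_pos.2 (Kq_pos hq))
    _ = _ := by ring

end Subspaces

theorem card_projectiveSpace_bounds_general (q n : ℕ)
    (F : Type) [Field F] [Fintype F] (hF : Fintype.card F = q) :
    (q : ℝ) ^ (n / 2 * (n - n / 2)) ≤ (Nat.card (Submodule F (Fin n → F)) : ℝ) ∧
      (Nat.card (Submodule F (Fin n → F)) : ℝ) <
        2 * (Kq q)⁻¹ * theta q * (q : ℝ) ^ (n / 2 * (n - n / 2)) := by
  subst hF
  have hn : finrank F (Fin n → F) = n := finrank_fin_fun F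
  constructor
  · have h := pow_le_card_submodule (F := F) (V := Fin n → F) (m := n / 2) (by omega)
    rw [hn] at h
    exact_mod_cast h
  · simpa only [hn] using card_submodule_lt (F := F) (V := Fin n → F)

theorem card_projectiveSpace_bounds (q n : ℕ) (hn : 1 ≤ n)
    (F : Type) [Field F] [Fintype F] (hF : Fintype.card F = q) :
    (q : ℝ) ^ (n / 2 * (n - n / 2)) ≤ (Nat.card (Submodule F (Fin n → F)) : ℝ) ∧
      (Nat.card (Submodule F (Fin n → F)) : ℝ) <
        2 * (Kq q)⁻¹ * theta q * (q : ℝ) ^ (n / 2 * (n - n / 2)) :=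
  card_projectiveSpace_bounds_general q n F hF
end

section
/- The injection distance d_I(U,V) = max{dim(U), dim(V)} - dim(U∩V) is a metric on the set of all subspaces of GF(q)^n. -/
/-- The injection distance `d_I(U,V) = max{dim U, dim V} - dim(U∩V)`. -/
noncomputable def dI {F : Type} [Field F] {n : ℕ} (U V : Submodule F (Fin n → F)) : ℕ :=
  max (Module.finrank F ↥U) (Module.finrank F ↥V) - Module.finrank F ↥(U ⊓ V)

lemma dI_inf_le_both {F : Type} [Field F] {n : ℕ} (U V : Submodule F (Fin n → F)) :
    Module.finrank F ↥(U ⊓ V) ≤ Module.finrank F ↥U ∧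
    Module.finrank F ↥(U ⊓ V) ≤ Module.finrank F ↥V :=
  ⟨Submodule.finrank_mono inf_le_left, Submodule.finrank_mono inf_le_right⟩

lemma dI_submod {F : Type} [Field F] {n : ℕ} (U V W : Submodule F (Fin n → F)) :
    Module.finrank F ↥(U ⊓ V) + Module.finrank F ↥(V ⊓ W) ≤
    Module.finrank F ↥(U ⊓ W) + Module.finrank F ↥V := by
  have h := Submodule.finrank_sup_add_finrank_inf_eq (U ⊓ V) (V ⊓ W)
  have h1 : Module.finrank F ↥((U ⊓ V) ⊔ (V ⊓ W)) ≤ Module.finrank F ↥V :=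
    Submodule.finrank_mono (sup_le inf_le_right inf_le_left)
  have h2 : Module.finrank F ↥((U ⊓ V) ⊓ (V ⊓ W)) ≤ Module.finrank F ↥(U ⊓ W) := by
    apply Submodule.finrank_mono
    exact le_inf (inf_le_left.trans inf_le_left) (inf_le_right.trans inf_le_right)
  omega

/-- The injection distance is a metric on the set of subspaces of `GF(q)^n`. -/
theorem dI_isMetric (F : Type) [Field F] [Fintype F] (n : ℕ) :
    (∀ U V : Submodule F (Fin n → F), 0 ≤ dI U V) ∧
    (∀ U V : Submodule F (Fin n → F), dI U V = 0 ↔ U = V) ∧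
    (∀ U V : Submodule F (Fin n → F), dI U V = dI V U) ∧
    (∀ U V W : Submodule F (Fin n → F), dI U W ≤ dI U V + dI V W) := by
  refine ⟨fun U V => Nat.zero_le _, fun U V => ?_, fun U V => ?_, fun U V W => ?_⟩
  · constructor
    · intro h
      unfold dI at h
      obtain ⟨h1, h2⟩ := dI_inf_le_both U V
      have hU : Module.finrank F ↥U = Module.finrank F ↥(U ⊓ V) := by omega
      have hV : Module.finrank F ↥V = Module.finrank F ↥(U ⊓ V) := by omega
      have eU : U ⊓ V = U := Submodule.eq_of_le_of_finrank_eq inf_le_left hU.symm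
      have eV : U ⊓ V = V := Submodule.eq_of_le_of_finrank_eq inf_le_right hV.symm
      exact eU.symm.trans eV
    · rintro rfl
      rw [dI]; rw [inf_idem U]; omega
  · unfold dI
    rw [inf_comm, max_comm]
  · obtain ⟨a1, a2⟩ := dI_inf_le_both U V
    obtain ⟨b1, b2⟩ := dI_inf_le_both V W
    obtain ⟨c1, c2⟩ := dI_inf_le_both U W
    have h := dI_submod U V W
    unfold dI
    omega
end

section
/- The number of subspaces V of dimension s in GF(q)^n at subspace distance exactly d from a fixed subspace U of dimension r is q^{u(d-u)} [r choose u]_q [n-r choose d-u]_q if u = (r+d-s)/2 is a nonnegative integer with u ≤ min{r,d} and d-u ≤ n-r, and 0 if r+d-s is odd. -/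
/-!
Since `dim (U + V) + dim (U ∩ V) = r + s`, the condition `d_S(U, V) = d` says exactly that
`dim (U ∩ V) = r - u`; in particular `r + d - s` is even. Sort such `V` by `W = U ∩ V`. By
duality, `U` has as many `(r - u)`-dimensional subspaces as `u`-dimensional ones, namely
`[r choose u]_q`. For fixed `W`, the correspondence theorem identifies the `V` with `U ∩ V = W`
with the `(d - u)`-dimensional subspaces of `GF(q)^n / W` meeting the `u`-dimensional image of `U`
trivially. Counting the `(d - u)`-tuples that stay independent modulo that image twice, once
through their span and once through their image in the `(n - r)`-dimensional quotient, gives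
`q ^ (u (d - u)) [n - r choose d - u]_q` such subspaces.
-/

open Module

/-- The Gaussian binomial coefficient `[n choose r]_q`, via its product formula. -/
noncomputable def gaussBinom (q n r : ℕ) : ℝ :=
  ∏ i ∈ Finset.range r, (((q : ℝ) ^ n - (q : ℝ) ^ i) / ((q : ℝ) ^ r - (q : ℝ) ^ i))

/-- The subspace distance `d_S(U,V) = dim(U+V) - dim(U∩V)`. -/
noncomputable def dS {F : Type} [Field F] {n : ℕ} (U V : Submodule F (Fin n → F)) : ℕ :=
  Module.finrank F ↥(U ⊔ V) - Module.finrank F ↥(U ⊓ V)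

open Submodule Set

theorem natCast_card_eq_of_card_fiber {R α β : Type*} [NonAssocSemiring R] [Finite α]
    [Finite β] (f : α → β) {c : R} (hc : ∀ b, (Nat.card {a // f a = b} : R) = c) :
    (Nat.card α : R) = Nat.card β * c := by
  have := Fintype.ofFinite β
  rw [← Nat.card_congr (Equiv.sigmaFiberEquiv f), Nat.card_sigma, Nat.cast_sum,
    Finset.sum_congr rfl fun b _ => hc b, Finset.sum_const, nsmul_eq_mul, Finset.card_univ,
    Nat.card_eq_fintype_card]

theorem gaussBinom_eq_div (q m t : ℕ) :
    gaussBinom q m t = (∏ i ∈ Finset.range t, ((q : ℝ) ^ m - (q : ℝ) ^ i)) /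
      ∏ i ∈ Finset.range t, ((q : ℝ) ^ t - (q : ℝ) ^ i) :=
  Finset.prod_div_distrib _ _

theorem natCast_prod_pow_sub_pow {q m t : ℕ} (hq : 0 < q) (ht : t ≤ m) :
    ((∏ i : Fin t, (q ^ m - q ^ (i : ℕ)) : ℕ) : ℝ) =
      ∏ i ∈ Finset.range t, ((q : ℝ) ^ m - (q : ℝ) ^ i) := by
  rw [Fin.prod_univ_eq_prod_range (fun i => q ^ m - q ^ i), Nat.cast_prod]
  refine Finset.prod_congr rfl fun i hi => ?_
  rw [Nat.cast_sub (Nat.pow_le_pow_right hq (by rw [Finset.mem_range] at hi; omega))]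
  push_cast
  rfl

theorem prod_pow_sub_pow_pos {q : ℝ} (hq : 1 < q) (t : ℕ) :
    0 < ∏ i ∈ Finset.range t, (q ^ t - q ^ i) :=
  Finset.prod_pos fun _ hi => sub_pos.2 (pow_lt_pow_right₀ hq (Finset.mem_range.1 hi))

section Ring

variable {R M : Type*} [Ring R] [AddCommGroup M] [Module R M]

theorem linearIndependent_mkQ_comp_iff {ι : Type*} (A : Submodule R M) {v : ι → M} :
    LinearIndependent R (A.mkQ ∘ v) ↔
      LinearIndependent R v ∧ Disjoint (span R (range v)) A := by
  refine ⟨fun h => ⟨h.of_comp, ?_⟩, fun ⟨hv, hdisj⟩ => hv.map (by rwa [ker_mkQ])⟩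
  simpa using Submodule.range_ker_disjoint h

theorem inf_comap_mkQ_eq_iff {U W : Submodule R M} (hWU : W ≤ U) (V' : Submodule R (M ⧸ W)) :
    U ⊓ V'.comap W.mkQ = W ↔ Disjoint V' (U.map W.mkQ) :=
  calc U ⊓ V'.comap W.mkQ = W
      ↔ (U.map W.mkQ ⊓ V').comap W.mkQ = (⊥ : Submodule R (M ⧸ W)).comap W.mkQ := by
        rw [comap_inf, comap_map_mkQ, sup_eq_right.2 hWU, comap_bot, ker_mkQ]
    _ ↔ U.map W.mkQ ⊓ V' = ⊥ := (comap_injective_of_surjective W.mkQ_surjective).eq_iff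
    _ ↔ Disjoint V' (U.map W.mkQ) := by rw [disjoint_iff, inf_comm]

end Ring

theorem card_subtype_mkQ_comp {K V ι : Type*} [DivisionRing K] [AddCommGroup V] [Module K V]
    [Finite ι] (A : Submodule K V) (P : (ι → V ⧸ A) → Prop) :
    Nat.card {v : ι → V // P (A.mkQ ∘ v)} =
      Nat.card {w // P w} * Nat.card A ^ Nat.card ι := by
  obtain ⟨C, hAC⟩ := A.exists_isCompl
  let e : V ≃ₗ[K] (V ⧸ A) × A := LinearMap.equivProdOfSurjectiveOfIsCompl A.mkQ
    (projectionOnto A C hAC) (range_mkQ A) (range_projectionOnto hAC)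
    (by rwa [ker_mkQ, ker_projectionOnto])
  let E : (ι → V) ≃ (ι → V ⧸ A) × (ι → A) :=
    (Equiv.arrowCongr (Equiv.refl ι) e.toEquiv).trans (Equiv.arrowProdEquivProdArrow ι _ _)
  let E' : {v : ι → V // P (A.mkQ ∘ v)} ≃ {w // P w} × (ι → A) :=
    (E.subtypeEquiv fun v => Iff.rfl).trans Equiv.prodSubtypeFstEquivSubtypeProd
  rw [Nat.card_congr E', Nat.card_prod, Nat.card_fun]

section Field

variable {K V : Type*} [Field K] [AddCommGroup V] [Module K V] [FiniteDimensional K V]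

theorem finrank_comap_mkQ (W : Submodule K V) (V' : Submodule K (V ⧸ W)) :
    finrank K (V'.comap W.mkQ) = finrank K V' + finrank K W := by
  have h := LinearMap.finrank_range_add_finrank_ker (W.mkQ ∘ₗ (V'.comap W.mkQ).subtype)
  rw [LinearMap.range_comp, range_subtype, map_comap_eq_of_surjective W.mkQ_surjective,
    LinearMap.ker_comp, ker_mkQ, (comapSubtypeEquivOfLe (le_comap_mkQ W V')).finrank_eq] at h
  exact h.symm

theorem card_finrank_eq_and_inf_eq_eq_card_disjoint {U W : Submodule K V} (hWU : W ≤ U)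
    (t : ℕ) :
    Nat.card {V' : Submodule K V // finrank K V' = finrank K W + t ∧ U ⊓ V' = W} =
      Nat.card {V' : Submodule K (V ⧸ W) // finrank K V' = t ∧ Disjoint V' (U.map W.mkQ)} := by
  let P (V' : Submodule K V) := finrank K V' = finrank K W + t ∧ U ⊓ V' = W
  let e : {V' : Submodule K (V ⧸ W) // finrank K V' = t ∧ Disjoint V' (U.map W.mkQ)} ≃
      {V' // P V'} :=
    ((comapMkQRelIso W).toEquiv.subtypeEquiv (q := fun X => P X.1) fun V' => by
      change _ ↔ finrank K (V'.comap W.mkQ) = _ ∧ U ⊓ V'.comap W.mkQ = W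
      rw [finrank_comap_mkQ, inf_comap_mkQ_eq_iff hWU]
      exact and_congr_left' (by omega)).trans
    ((Equiv.subtypeSubtypeEquivSubtypeInter (W ≤ ·) _).trans
      (Equiv.subtypeEquivRight fun V' =>
        and_iff_right_of_imp fun (h : P V') => h.2 ▸ inf_le_right))
  exact (Nat.card_congr e).symm

theorem card_finrank_eq_eq_card_dual {k : ℕ} (hk : k ≤ finrank K V) :
    Nat.card {W : Submodule K V // finrank K W = k} =
      Nat.card {W : Submodule K (Dual K V) // finrank K W = finrank K V - k} :=
  Nat.card_congr <| (Subspace.orderIsoFiniteDimensional (K := K) (V := V)).toEquiv.subtypeEquiv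
    fun W => by
      have := W.finrank_add_finrank_dualAnnihilator_eq
      change _ ↔ finrank K W.dualAnnihilator = _
      omega

end Field

section FiniteField

variable {K V : Type*} [Field K] [Fintype K] [AddCommGroup V] [Module K V] [Finite V]

local notation "q" => Fintype.card K

theorem card_linearIndependent_and_span_eq (P : Submodule K V → Prop) (t : ℕ) :
    Nat.card {v : Fin t → V // LinearIndependent K v ∧ P (span K (range v))} =
      Nat.card {W : Submodule K V // finrank K W = t ∧ P W} *
        ∏ i : Fin t, (q ^ t - q ^ (i : ℕ)) := by
  let f : {v : Fin t → V // LinearIndependent K v ∧ P (span K (range v))} →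
      {W : Submodule K V // finrank K W = t ∧ P W} := fun v =>
    ⟨span K (range v.1), by rw [finrank_span_eq_card v.2.1, Fintype.card_fin], v.2.2⟩
  refine natCast_card_eq_of_card_fiber (R := ℕ) f fun W => ?_
  have hW : finrank K W.1 = t := W.2.1
  have hcard := card_linearIndependent (K := K) (V := W.1) hW.ge
  rw [hW] at hcard
  have hspan (u : Fin t → W.1) (hu : LinearIndependent K u) :
      span K (range (W.1.subtype ∘ u)) = W.1 :=
    eq_of_le_of_finrank_eq (span_le.2 (range_subset_iff.2 fun i => (u i).2))
      (by rw [finrank_span_eq_card (hu.map' _ W.1.ker_subtype), Fintype.card_fin, hW])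
  rw [Nat.cast_id, ← hcard]
  exact Nat.card_congr
    { toFun := fun v =>
        ⟨fun i => ⟨v.1.1 i, congrArg Subtype.val v.2 ▸ subset_span ⟨i, rfl⟩⟩,
          LinearIndependent.of_comp W.1.subtype v.1.2.1⟩
      invFun := fun u => ⟨⟨W.1.subtype ∘ u.1, u.2.map' _ W.1.ker_subtype,
        (hspan u.1 u.2).symm ▸ W.2.2⟩, Subtype.ext (hspan u.1 u.2)⟩
      left_inv := fun v => rfl
      right_inv := fun u => rfl }

theorem card_finrank_eq_and_disjoint (A : Submodule K V) {t : ℕ}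
    (ht : t ≤ finrank K (V ⧸ A)) :
    (Nat.card {W : Submodule K V // finrank K W = t ∧ Disjoint W A} : ℝ) =
      (q : ℝ) ^ (finrank K A * t) * gaussBinom q (finrank K (V ⧸ A)) t := by
  have hq : 1 < q := Fintype.one_lt_card
  have : Finite (V ⧸ A) := Module.finite_of_finite K
  have hcount := card_subtype_mkQ_comp A (fun w : Fin t → V ⧸ A => LinearIndependent K w)
  rw [Nat.card_congr (Equiv.subtypeEquivRight fun v => linearIndependent_mkQ_comp_iff A),
    card_linearIndependent_and_span_eq (fun W => Disjoint W A), card_linearIndependent ht,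
    natCard_eq_pow_finrank (K := K) (V := A), Nat.card_eq_fintype_card (α := K), Nat.card_fin]
    at hcount
  replace hcount := congrArg (Nat.cast : ℕ → ℝ) hcount
  push_cast [natCast_prod_pow_sub_pow hq.le le_rfl, natCast_prod_pow_sub_pow hq.le ht] at hcount
  rw [gaussBinom_eq_div, mul_div_assoc', eq_div_iff
    (prod_pow_sub_pow_pos (Nat.one_lt_cast.2 hq) t).ne', hcount]
  ring

theorem card_finrank_eq {k : ℕ} (hk : k ≤ finrank K V) :
    (Nat.card {W : Submodule K V // finrank K W = k} : ℝ) = gaussBinom q (finrank K V) k := by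
  have hbot : finrank K (V ⧸ (⊥ : Submodule K V)) = finrank K V :=
    (quotEquivOfEqBot ⊥ rfl).finrank_eq
  have h := card_finrank_eq_and_disjoint (⊥ : Submodule K V) (hbot ▸ hk)
  simpa only [disjoint_bot_right, and_true, finrank_bot, zero_mul, pow_zero, one_mul, hbot]
    using h

theorem card_le_and_finrank_eq (U : Submodule K V) {k : ℕ} (hk : k ≤ finrank K U) :
    (Nat.card {W : Submodule K V // W ≤ U ∧ finrank K W = k} : ℝ) =
      gaussBinom q (finrank K U) (finrank K U - k) := by
  have : Finite (Dual K U) := Module.finite_of_finite K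
  let e : {W : Submodule K U // finrank K W = k} ≃
      {W : Submodule K V // W ≤ U ∧ finrank K W = k} :=
    ((MapSubtype.orderIso U).toEquiv.subtypeEquiv fun W => by
        rw [← finrank_map_subtype_eq]
        rfl).trans
      (Equiv.subtypeSubtypeEquivSubtypeInter (· ≤ U) (finrank K · = k))
  rw [← Nat.card_congr e, card_finrank_eq_eq_card_dual hk,
    card_finrank_eq (by rw [Subspace.dual_finrank_eq]; omega), Subspace.dual_finrank_eq]

theorem card_finrank_eq_and_inf_eq {U W : Submodule K V} (hWU : W ≤ U) {t : ℕ}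
    (ht : t ≤ finrank K V - finrank K U) :
    (Nat.card {V' : Submodule K V // finrank K V' = finrank K W + t ∧ U ⊓ V' = W} : ℝ) =
      (q : ℝ) ^ ((finrank K U - finrank K W) * t) *
        gaussBinom q (finrank K V - finrank K U) t := by
  have : Finite (V ⧸ W) := Module.finite_of_finite K
  have hA : finrank K (U.map W.mkQ) = finrank K U - finrank K W := by
    have := finrank_comap_mkQ W (U.map W.mkQ)
    rw [comap_map_mkQ, sup_eq_right.2 hWU] at this
    omega
  have hQ : finrank K ((V ⧸ W) ⧸ U.map W.mkQ) = finrank K V - finrank K U := by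
    have := (U.map W.mkQ).finrank_quotient_add_finrank
    have := W.finrank_quotient_add_finrank
    have := Submodule.finrank_mono hWU
    have := U.finrank_le
    omega
  rw [card_finrank_eq_and_inf_eq_eq_card_disjoint hWU, card_finrank_eq_and_disjoint _ (hQ ▸ ht),
    hA, hQ]

theorem card_finrank_eq_and_finrank_inf_eq (U : Submodule K V) {k t : ℕ} (hk : k ≤ finrank K U)
    (ht : t ≤ finrank K V - finrank K U) :
    (Nat.card {V' : Submodule K V // finrank K V' = k + t ∧ finrank K ↥(U ⊓ V') = k} : ℝ) =
      (q : ℝ) ^ ((finrank K U - k) * t) * gaussBinom q (finrank K U) (finrank K U - k) *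
        gaussBinom q (finrank K V - finrank K U) t := by
  let f (V' : {V' : Submodule K V // finrank K V' = k + t ∧ finrank K ↥(U ⊓ V') = k}) :
      {W : Submodule K V // W ≤ U ∧ finrank K W = k} := ⟨U ⊓ V'.1, inf_le_left, V'.2.2⟩
  have hfiber (W : {W : Submodule K V // W ≤ U ∧ finrank K W = k}) :
      (Nat.card {V' // f V' = W} : ℝ) =
        (q : ℝ) ^ ((finrank K U - k) * t) * gaussBinom q (finrank K V - finrank K U) t := by
    have h := card_finrank_eq_and_inf_eq W.2.1 ht
    rw [W.2.2] at h
    rw [← h]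
    exact congrArg _ <| Nat.card_congr
      { toFun := fun V' => ⟨V'.1.1, V'.1.2.1, congrArg Subtype.val V'.2⟩
        invFun := fun V' => ⟨⟨V'.1, V'.2.1, V'.2.2.symm ▸ W.2.2⟩, Subtype.ext V'.2.2⟩
        left_inv := fun _ => rfl
        right_inv := fun _ => rfl }
  rw [natCast_card_eq_of_card_fiber f hfiber, card_le_and_finrank_eq U hk]
  ring

end FiniteField

theorem dS_add_two_mul_finrank_inf {F : Type} [Field F] {n : ℕ}
    (U V : Submodule F (Fin n → F)) :
    dS U V + 2 * finrank F ↥(U ⊓ V) = finrank F U + finrank F V := by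
  have := Submodule.finrank_sup_add_finrank_inf_eq U V
  have := Submodule.finrank_mono (inf_le_left.trans le_sup_left : U ⊓ V ≤ U ⊔ V)
  unfold dS
  omega

theorem count_at_subspace_distance (F : Type) [Field F] [Fintype F] (n r s d : ℕ)
    (U : Submodule F (Fin n → F)) (hU : finrank F ↥U = r) :
    (∀ u : ℕ, r + d = s + 2 * u → u ≤ r → u ≤ d → d - u ≤ n - r →
      (Nat.card {V : Submodule F (Fin n → F) // finrank F ↥V = s ∧ dS U V = d} : ℝ)
        = (Fintype.card F : ℝ) ^ (u * (d - u)) * gaussBinom (Fintype.card F) r u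
            * gaussBinom (Fintype.card F) (n - r) (d - u)) ∧
    (Odd ((r : ℤ) + (d : ℤ) - (s : ℤ)) →
      Nat.card {V : Submodule F (Fin n → F) // finrank F ↥V = s ∧ dS U V = d} = 0) := by
  have hn : finrank F (Fin n → F) = n := by simp
  refine ⟨fun u hu hur hud hdn => ?_, fun ⟨c, hc⟩ => ?_⟩
  · have hiff (V : Submodule F (Fin n → F)) : finrank F V = s ∧ dS U V = d ↔
        finrank F V = r - u + (d - u) ∧ finrank F ↥(U ⊓ V) = r - u := by
      have := dS_add_two_mul_finrank_inf U V
      constructor <;> rintro ⟨h1, h2⟩ <;> constructor <;> omega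
    rw [Nat.card_congr (Equiv.subtypeEquivRight hiff),
      card_finrank_eq_and_finrank_inf_eq U (by omega) (by rwa [hn, hU]), hU, hn,
      Nat.sub_sub_self hur]
  · refine Nat.card_eq_zero.2 (.inl ⟨fun ⟨V, hV, hd⟩ => ?_⟩)
    have := dS_add_two_mul_finrank_inf U V
    omega
end

section
/- The number of subspaces V of dimension s at injection distance exactly d from a fixed r-dimensional subspace U of GF(q)^n equals the number of subspaces of dimension s at subspace distance exactly 2d - |r-s| from U; explicitly, for r ≥ s it equals q^{d(d+s-r)} [r choose d]_q [n-r choose d+s-r]_q and for r ≤ s it equals q^{d(d+r-s)} [r choose d+r-s]_q [n-r choose d]_q. -/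
/-!
Write `k = dim (U ⊓ V)`. Then `d_I = max r s - k` and `d_S = r + s - 2k`, which gives the first
claim, and it remains to count the `s`-spaces `V` with `dim (U ⊓ V) = k` in an `m`-dimensional
space `M`. Fibring them over `W = U ⊓ V`, a `k`-subspace of `U`, and passing to `V / W` identifies
each fibre with the `(s - k)`-subspaces of `M / W` meeting `U / W` trivially. The `j`-subspaces
meeting a `w`-dimensional `W` trivially are counted by double counting the `j`-tuples that are
linearly independent modulo `W`: there are `q^(wj) ∏_{i<j} (q^(m-w) - q^i)` of them, and each such
subspace is spanned by exactly `∏_{i<j} (q^j - q^i)` of them. Hence the count is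
`[r, k]_q q^((r-k)(s-k)) [m-r, s-k]_q`, and `k = max r s - d` together with the symmetry
`[r, k]_q = [r, r-k]_q` gives both formulas.
-/

open Module

/-- Gaussian binomial with integer lower index, `0` for negative lower index. -/
noncomputable def gaussZ (q m : ℕ) (k : ℤ) : ℝ :=
  if 0 ≤ k then gaussBinom q m k.toNat else 0

open Submodule

noncomputable def gaussNumer (q m j : ℕ) : ℝ :=
  ∏ i ∈ Finset.range j, ((q : ℝ) ^ m - (q : ℝ) ^ i)

section GaussBinom

variable {q : ℕ}

lemma gaussBinom_eq_div_s8 (m j : ℕ) : gaussBinom q m j = gaussNumer q m j / gaussNumer q j j := by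
  rw [gaussBinom, gaussNumer, gaussNumer, Finset.prod_div_distrib]

lemma gaussNumer_pos (hq : 1 < q) {m j : ℕ} (h : j ≤ m) : 0 < gaussNumer q m j :=
  Finset.prod_pos fun _ hi => sub_pos.2 <|
    pow_lt_pow_right₀ (by exact_mod_cast hq) ((Finset.mem_range.1 hi).trans_le h)

lemma gaussBinom_eq_zero {m j : ℕ} (h : m < j) : gaussBinom q m j = 0 := by
  rw [gaussBinom_eq_div_s8, gaussNumer, Finset.prod_eq_zero (Finset.mem_range.2 h) (sub_self _),
    zero_div]

lemma gaussNumer_self {m k : ℕ} (h : k ≤ m) :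
    gaussNumer q m m =
      gaussNumer q m k * (q : ℝ) ^ (k * (m - k)) * gaussNumer q (m - k) (m - k) := by
  have hshift : ∀ x, (q : ℝ) ^ m - (q : ℝ) ^ (k + x) =
      (q : ℝ) ^ k * ((q : ℝ) ^ (m - k) - (q : ℝ) ^ x) :=
    fun x => by rw [mul_sub, ← pow_add, ← pow_add, Nat.add_sub_cancel' h]
  conv_lhs => rw [gaussNumer, ← Nat.add_sub_cancel' h, Finset.prod_range_add]
  simp only [hshift, Finset.prod_mul_distrib, Finset.prod_const, Finset.card_range, ← pow_mul,
    Nat.add_sub_cancel' h]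
  rw [gaussNumer, gaussNumer, mul_assoc]

lemma gaussBinom_symm (hq : 1 < q) {m k : ℕ} (h : k ≤ m) :
    gaussBinom q m k = gaussBinom q m (m - k) := by
  have hk := gaussNumer_self (q := q) h
  have hk' := gaussNumer_self (q := q) (Nat.sub_le m k)
  rw [Nat.sub_sub_self h, mul_comm (m - k) k] at hk'
  rw [gaussBinom_eq_div_s8, gaussBinom_eq_div_s8,
    div_eq_div_iff (gaussNumer_pos hq le_rfl).ne' (gaussNumer_pos hq le_rfl).ne']
  apply mul_right_cancel₀ (pow_ne_zero (k * (m - k)) (by positivity : (q : ℝ) ≠ 0))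
  linear_combination hk' - hk

lemma gaussBinom_eq_gaussZ_sub (hq : 1 < q) (m k : ℕ) :
    gaussBinom q m k = gaussZ q m (m - k) := by
  rcases le_or_gt k m with h | h
  · rw [gaussZ, if_pos (by omega), gaussBinom_symm hq h]
    congr
    omega
  · rw [gaussZ, if_neg (by omega), gaussBinom_eq_zero h]

lemma gaussZ_natCast (m k : ℕ) : gaussZ q m k = gaussBinom q m k := by
  simp [gaussZ]

lemma gaussZ_of_neg {m : ℕ} {k : ℤ} (hk : k < 0) : gaussZ q m k = 0 :=
  if_neg hk.not_ge

lemma gaussZ_of_lt {m : ℕ} {k : ℤ} (hk : m < k) : gaussZ q m k = 0 := by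
  rw [gaussZ, if_pos (by omega), gaussBinom_eq_zero (by omega)]

end GaussBinom

theorem Nat.cast_card_eq_mul_of_card_fiber {α β R : Type*} [Finite α] [Finite β]
    [NonAssocSemiring R] (f : α → β) {c : R} (hc : ∀ b, (Nat.card {a // f a = b} : R) = c) :
    (Nat.card α : R) = Nat.card β * c := by
  have := Fintype.ofFinite β
  rw [Nat.card_congr (Equiv.sigmaFiberEquiv f).symm, Nat.card_sigma, Nat.cast_sum,
    Finset.sum_congr rfl fun b _ => hc b, Finset.sum_const, nsmul_eq_mul, Finset.card_univ,
    Nat.card_eq_fintype_card]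

instance Submodule.finite_of_finite {R M : Type*} [Semiring R] [AddCommMonoid M] [Module R M]
    [Finite M] : Finite (Submodule R M) :=
  Finite.of_injective _ SetLike.coe_injective

section Ring

variable {R M : Type*} [Ring R] [AddCommGroup M] [Module R M]

instance Submodule.finite_quotient [Finite M] (W : Submodule R M) : Finite (M ⧸ W) :=
  Finite.of_surjective _ W.mkQ_surjective

lemma Submodule.card_mkQ_fiber (W : Submodule R M) (y : M ⧸ W) :
    Nat.card {x // W.mkQ x = y} = Nat.card W :=
  Nat.card_congr <| (AddMonoidHom.fiberEquivKerOfSurjective (f := W.mkQ.toAddMonoidHom)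
    W.mkQ_surjective y).trans (Equiv.setCongr (by ext; simp))

lemma Submodule.card_subtype_mkQ_comp [Finite M] {ι : Type*} [Fintype ι] (W : Submodule R M)
    (P : (ι → M ⧸ W) → Prop) :
    Nat.card {v : ι → M // P (W.mkQ ∘ v)} =
      Nat.card {u // P u} * Nat.card W ^ Fintype.card ι := by
  refine (Nat.cast_id _).symm.trans <|
    Nat.cast_card_eq_mul_of_card_fiber (fun v => ⟨W.mkQ ∘ v.1, v.2⟩) fun u => ?_
  have e : {v : {v : ι → M // P (W.mkQ ∘ v)} // (⟨W.mkQ ∘ v.1, v.2⟩ : {u // P u}) = u}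
      ≃ ∀ i, {x // W.mkQ x = u.1 i} :=
    (Equiv.subtypeEquivRight fun v => by simp only [Subtype.ext_iff, funext_iff,
      Function.comp_apply]).trans <|
      (Equiv.subtypeSubtypeEquivSubtype fun h => (funext h : W.mkQ ∘ _ = u.1) ▸ u.2).trans
      Equiv.subtypePiEquivPi
  rw [Nat.card_congr e, Nat.card_pi, Finset.prod_congr rfl fun i _ => W.card_mkQ_fiber (u.1 i),
    Finset.prod_const, Finset.card_univ, Nat.cast_id]

lemma Submodule.disjoint_map_mkQ_iff {W U V : Submodule R M} (hU : W ≤ U) (hV : W ≤ V) :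
    Disjoint (U.map W.mkQ) (V.map W.mkQ) ↔ U ⊓ V = W := by
  rw [disjoint_iff, ← (comap_injective_of_surjective W.mkQ_surjective).eq_iff, comap_inf,
    comap_map_mkQ, comap_map_mkQ, comap_bot, ker_mkQ, sup_eq_right.2 hU, sup_eq_right.2 hV]

end Ring

lemma card_linearIndependent_span_eq {K V : Type*} [DivisionRing K] [AddCommGroup V] [Module K V]
    (Y : Submodule K V) [FiniteDimensional K Y] {j : ℕ} (hY : finrank K Y = j) :
    Nat.card {v : Fin j → V // LinearIndependent K v ∧ span K (Set.range v) = Y} =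
      Nat.card {u : Fin j → Y // LinearIndependent K u} :=
  Nat.card_congr
    { toFun := fun v =>
        ⟨fun i => ⟨v.1 i, v.2.2.le (subset_span ⟨i, rfl⟩)⟩, v.2.1.of_comp Y.subtype⟩
      invFun := fun u => ⟨Y.subtype ∘ u.1, u.2.map' Y.subtype Y.ker_subtype,
        eq_of_le_of_finrank_eq (span_le.2 (Set.range_subset_iff.2 fun i => (u.1 i).2))
          (by rw [finrank_span_eq_card (u.2.map' Y.subtype Y.ker_subtype), Fintype.card_fin, hY])⟩
      left_inv := fun _ => rfl
      right_inv := fun _ => rfl }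

lemma Submodule.finrank_map_mkQ_add_finrank {K V : Type*} [DivisionRing K] [AddCommGroup V]
    [Module K V] [FiniteDimensional K V] {W Y : Submodule K V} (h : W ≤ Y) :
    finrank K (Y.map W.mkQ) + finrank K W = finrank K Y := by
  have := LinearMap.finrank_range_add_finrank_ker (W.mkQ.domRestrict Y)
  rwa [LinearMap.range_domRestrict, LinearMap.ker_domRestrict, ker_mkQ,
    (comapSubtypeEquivOfLe h).finrank_eq] at this

section FiniteField

variable {F M : Type*} [Field F] [Fintype F] [AddCommGroup M] [Module F M] [Finite M]

lemma card_linearIndependent_eq_gaussNumer (j : ℕ) :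
    (Nat.card {v : Fin j → M // LinearIndependent F v} : ℝ) =
      gaussNumer (Fintype.card F) (finrank F M) j := by
  rcases le_or_gt j (finrank F M) with hj | hj
  · rw [card_linearIndependent hj, Nat.cast_prod, Finset.prod_fin_eq_prod_range, gaussNumer]
    refine Finset.prod_congr rfl fun i hi => ?_
    have hi : i < j := Finset.mem_range.1 hi
    rw [dif_pos hi, Nat.cast_sub (Nat.pow_le_pow_right Fintype.card_pos (by omega))]
    push_cast
    rfl
  · have : IsEmpty {v : Fin j → M // LinearIndependent F v} :=
      ⟨fun v => hj.not_ge (by simpa using v.2.fintype_card_le_finrank)⟩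
    rw [Nat.card_of_isEmpty, Nat.cast_zero, gaussNumer,
      Finset.prod_eq_zero (Finset.mem_range.2 hj) (sub_self _)]

lemma card_finrank_eq_and_disjoint_s8 (W : Submodule F M) (j : ℕ) :
    (Nat.card {Y : Submodule F M // finrank F Y = j ∧ Disjoint W Y} : ℝ) =
      (Fintype.card F : ℝ) ^ (finrank F W * j) *
        gaussBinom (Fintype.card F) (finrank F M - finrank F W) j := by
  set q := Fintype.card F
  let span_of : {v : Fin j → M // LinearIndependent F (W.mkQ ∘ v)} →
      {Y : Submodule F M // finrank F Y = j ∧ Disjoint W Y} := fun v =>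
    ⟨span F (Set.range v.1), by rw [finrank_span_eq_card (v.2.of_comp _), Fintype.card_fin],
      by simpa using (range_ker_disjoint v.2).symm⟩
  have hfiber : ∀ Y, (Nat.card {v // span_of v = Y} : ℝ) = gaussNumer q j j := by
    rintro ⟨Y, hYj, hWY⟩
    have hli : ∀ v : Fin j → M, span F (Set.range v) = Y →
        (LinearIndependent F (W.mkQ ∘ v) ↔ LinearIndependent F v) := fun v hv =>
      W.mkQ.linearIndependent_iff_of_disjoint (by rw [hv, ker_mkQ]; exact hWY.symm)
    have e : {v // span_of v = ⟨Y, hYj, hWY⟩} ≃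
        {v : Fin j → M // LinearIndependent F v ∧ span F (Set.range v) = Y} :=
      (Equiv.subtypeEquivRight fun v => Subtype.ext_iff).trans <|
        (Equiv.subtypeSubtypeEquivSubtypeInter (fun v => LinearIndependent F (W.mkQ ∘ v))
          (fun v => span F (Set.range v) = Y)).trans <| Equiv.subtypeEquivRight fun v =>
          ⟨fun h => ⟨(hli v h.2).1 h.1, h.2⟩, fun h => ⟨(hli v h.2).2 h.1, h.2⟩⟩
    rw [Nat.card_congr e, card_linearIndependent_span_eq Y hYj,
      card_linearIndependent_eq_gaussNumer, hYj]
  have hcount := Nat.cast_card_eq_mul_of_card_fiber span_of hfiber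
  rw [W.card_subtype_mkQ_comp (P := fun u => LinearIndependent F u), Fintype.card_fin,
    Nat.cast_mul, Nat.cast_pow, card_linearIndependent_eq_gaussNumer, finrank_quotient,
    natCard_eq_pow_finrank (K := F) (V := W), Nat.card_eq_fintype_card (α := F)] at hcount
  rw [gaussBinom_eq_div_s8, eq_comm, ← mul_div_assoc,
    div_eq_iff (gaussNumer_pos Fintype.one_lt_card le_rfl).ne']
  push_cast at hcount
  rw [pow_mul]
  linear_combination hcount

lemma card_finrank_eq_s8 (j : ℕ) :
    (Nat.card {Y : Submodule F M // finrank F Y = j} : ℝ) =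
      gaussBinom (Fintype.card F) (finrank F M) j := by
  simpa using card_finrank_eq_and_disjoint_s8 (⊥ : Submodule F M) j

lemma card_le_finrank_eq (U : Submodule F M) (k : ℕ) :
    (Nat.card {W : Submodule F M // W ≤ U ∧ finrank F W = k} : ℝ) =
      gaussBinom (Fintype.card F) (finrank F U) k := by
  rw [← card_finrank_eq_s8 (M := U)]
  congr 1
  refine Nat.card_congr <| (Equiv.subtypeSubtypeEquivSubtypeInter (· ≤ U)
    (fun W => finrank F W = k)).symm.trans ?_
  exact (MapSubtype.orderIso U).toEquiv.symm.subtypeEquiv fun W => by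
    change _ ↔ finrank F (comap U.subtype W.1) = k
    rw [(comapSubtypeEquivOfLe W.2).finrank_eq]

lemma card_finrank_eq_inf_eq {U W : Submodule F M} (hWU : W ≤ U) {s : ℕ}
    (hWs : finrank F W ≤ s) :
    (Nat.card {V : Submodule F M // finrank F V = s ∧ U ⊓ V = W} : ℝ) =
      (Fintype.card F : ℝ) ^ ((finrank F U - finrank F W) * (s - finrank F W)) *
        gaussBinom (Fintype.card F) (finrank F M - finrank F U) (s - finrank F W) := by
  have hdim : ∀ {V : Submodule F M}, W ≤ V →
      finrank F (V.map W.mkQ) = finrank F V - finrank F W :=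
    fun h => by have := finrank_map_mkQ_add_finrank h; omega
  have hle : ∀ {V : Submodule F M}, U ⊓ V = W → W ≤ V := fun h => h ▸ inf_le_right
  let e : {V : Submodule F M // finrank F V = s ∧ U ⊓ V = W} ≃
      {Y : Submodule F (M ⧸ W) // finrank F Y = s - finrank F W ∧ Disjoint (U.map W.mkQ) Y} :=
    { toFun := fun V => ⟨V.1.map W.mkQ, by rw [hdim (hle V.2.2), V.2.1],
        (disjoint_map_mkQ_iff hWU (hle V.2.2)).2 V.2.2⟩
      invFun := fun Y => ⟨Y.1.comap W.mkQ, by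
          have := finrank_map_mkQ_add_finrank (le_comap_mkQ W Y.1)
          rw [map_comap_eq_of_surjective W.mkQ_surjective, Y.2.1] at this
          omega,
        (disjoint_map_mkQ_iff hWU (le_comap_mkQ W Y.1)).1
          (by rw [map_comap_eq_of_surjective W.mkQ_surjective]; exact Y.2.2)⟩
      left_inv := fun V => Subtype.ext <| by
        simp only [comap_map_mkQ, sup_eq_right.2 (hle V.2.2)]
      right_inv := fun Y => Subtype.ext (map_comap_eq_of_surjective W.mkQ_surjective Y.1) }
  have hWr := finrank_mono hWU
  have hrm := U.finrank_le
  rw [Nat.card_congr e, card_finrank_eq_and_disjoint_s8, hdim hWU, finrank_quotient,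
    show finrank F M - finrank F W - (finrank F U - finrank F W) = finrank F M - finrank F U by
      omega]

lemma card_finrank_inf_eq_of_le (U : Submodule F M) {k s : ℕ} (hks : k ≤ s) :
    (Nat.card {V : Submodule F M // finrank F V = s ∧ finrank F ↥(U ⊓ V) = k} : ℝ) =
      gaussBinom (Fintype.card F) (finrank F U) k *
        (Fintype.card F : ℝ) ^ ((finrank F U - k) * (s - k)) *
          gaussBinom (Fintype.card F) (finrank F M - finrank F U) (s - k) := by
  let inter : {V : Submodule F M // finrank F V = s ∧ finrank F ↥(U ⊓ V) = k} →
      {W : Submodule F M // W ≤ U ∧ finrank F W = k} :=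
    fun V => ⟨U ⊓ V.1, inf_le_left, V.2.2⟩
  have hfiber : ∀ W, (Nat.card {V // inter V = W} : ℝ) =
      (Fintype.card F : ℝ) ^ ((finrank F U - k) * (s - k)) *
        gaussBinom (Fintype.card F) (finrank F M - finrank F U) (s - k) := by
    rintro ⟨W, hWU, hWk⟩
    have e : {V // inter V = ⟨W, hWU, hWk⟩} ≃
        {V : Submodule F M // finrank F V = s ∧ U ⊓ V = W} :=
      (Equiv.subtypeEquivRight fun V => Subtype.ext_iff).trans <|
        (Equiv.subtypeSubtypeEquivSubtypeInter _ (fun V => U ⊓ V = W)).trans <|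
          Equiv.subtypeEquivRight fun V =>
            ⟨fun h => ⟨h.1.1, h.2⟩, fun h => ⟨⟨h.1, h.2 ▸ hWk⟩, h.2⟩⟩
    rw [Nat.card_congr e, card_finrank_eq_inf_eq hWU (hWk ▸ hks), hWk]
  rw [Nat.cast_card_eq_mul_of_card_fiber inter hfiber, card_le_finrank_eq, mul_assoc]

/-- With integer exponents and `gaussZ` this holds for every `k`: out of range both sides
vanish. -/
lemma card_finrank_inf_eq (U : Submodule F M) (k s : ℕ) :
    (Nat.card {V : Submodule F M // finrank F V = s ∧ finrank F ↥(U ⊓ V) = k} : ℝ) =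
      gaussBinom (Fintype.card F) (finrank F U) k *
        (Fintype.card F : ℝ) ^ (((finrank F U : ℤ) - k) * ((s : ℤ) - k)) *
          gaussZ (Fintype.card F) (finrank F M - finrank F U) ((s : ℤ) - k) := by
  rcases le_or_gt k s with hks | hks
  · rw [card_finrank_inf_eq_of_le U hks, ← Nat.cast_sub hks, gaussZ_natCast]
    rcases le_or_gt k (finrank F U) with hkr | hkr
    · rw [← Nat.cast_sub hkr, ← Nat.cast_mul, zpow_natCast]
    · simp [gaussBinom_eq_zero hkr]
  · have : IsEmpty {V : Submodule F M // finrank F V = s ∧ finrank F ↥(U ⊓ V) = k} :=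
      ⟨fun ⟨V, hV, hk⟩ => by have := finrank_mono (inf_le_right : U ⊓ V ≤ V); omega⟩
    simp [gaussZ_of_neg (sub_neg.2 (Int.ofNat_lt.2 hks))]

end FiniteField

section Distances

variable {F : Type} [Field F] {n : ℕ}

lemma dS_eq_two_mul_dI_sub_abs (U V : Submodule F (Fin n → F)) :
    (dS U V : ℤ) = 2 * dI U V - |(finrank F U : ℤ) - finrank F V| := by
  have hsum := finrank_sup_add_finrank_inf_eq U V
  have hU := finrank_mono (inf_le_left : U ⊓ V ≤ U)
  have hV := finrank_mono (inf_le_right : U ⊓ V ≤ V)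
  unfold dS dI
  rcases le_total (finrank F U) (finrank F V) with h | h
  · rw [max_eq_right h, abs_of_nonpos (by omega)]
    omega
  · rw [max_eq_left h, abs_of_nonneg (by omega)]
    omega

variable {U : Submodule F (Fin n → F)} {r s d : ℕ}

lemma card_dI_eq_card_finrank_inf (hU : finrank F U = r) (hd : d ≤ max r s) :
    Nat.card {V : Submodule F (Fin n → F) // finrank F V = s ∧ dI U V = d} =
      Nat.card {V : Submodule F (Fin n → F) //
        finrank F V = s ∧ finrank F ↥(U ⊓ V) = max r s - d} :=
  Nat.card_congr <| Equiv.subtypeEquivRight fun V => and_congr_right fun hV => by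
    have := finrank_mono (inf_le_left : U ⊓ V ≤ U)
    unfold dI
    omega

lemma card_dI_eq_zero (hU : finrank F U = r) (hd : max r s < d) :
    Nat.card {V : Submodule F (Fin n → F) // finrank F V = s ∧ dI U V = d} = 0 := by
  have : IsEmpty {V : Submodule F (Fin n → F) // finrank F V = s ∧ dI U V = d} :=
    ⟨fun ⟨V, hV, hdI⟩ => by unfold dI at hdI; omega⟩
  exact Nat.card_of_isEmpty

end Distances

theorem count_at_injection_distance (F : Type) [Field F] [Fintype F] (n r s d : ℕ)
    (U : Submodule F (Fin n → F)) (hU : finrank F ↥U = r) :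
    (Nat.card {V : Submodule F (Fin n → F) // finrank F ↥V = s ∧ dI U V = d}
      = Nat.card {V : Submodule F (Fin n → F) // finrank F ↥V = s ∧
          (dS U V : ℤ) = 2 * (d : ℤ) - |(r : ℤ) - (s : ℤ)|}) ∧
    (s ≤ r →
      (Nat.card {V : Submodule F (Fin n → F) // finrank F ↥V = s ∧ dI U V = d} : ℝ)
        = (Fintype.card F : ℝ) ^ ((d : ℤ) * ((d : ℤ) + s - r))
            * gaussBinom (Fintype.card F) r d
            * gaussZ (Fintype.card F) (n - r) ((d : ℤ) + s - r)) ∧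
    (r ≤ s →
      (Nat.card {V : Submodule F (Fin n → F) // finrank F ↥V = s ∧ dI U V = d} : ℝ)
        = (Fintype.card F : ℝ) ^ ((d : ℤ) * ((d : ℤ) + r - s))
            * gaussZ (Fintype.card F) r ((d : ℤ) + r - s)
            * gaussBinom (Fintype.card F) (n - r) d) := by
  have hq : 1 < Fintype.card F := Fintype.one_lt_card
  refine ⟨Nat.card_congr <| Equiv.subtypeEquivRight fun V => and_congr_right fun hV => ?_,
    fun hsr => ?_, fun hrs => ?_⟩
  · rw [dS_eq_two_mul_dI_sub_abs, hU, hV, sub_left_inj, mul_right_inj' two_ne_zero, Nat.cast_inj]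
  · rcases le_or_gt d r with hd | hd
    · rw [card_dI_eq_card_finrank_inf hU (by omega), card_finrank_inf_eq, hU, finrank_fin_fun,
        max_eq_left hsr, gaussBinom_symm hq (Nat.sub_le r d), Nat.sub_sub_self hd, Nat.cast_sub hd]
      ring_nf
    · rw [card_dI_eq_zero hU (by omega), gaussBinom_eq_zero hd]
      simp
  · rcases le_or_gt d s with hd | hd
    · rw [card_dI_eq_card_finrank_inf hU (by omega), card_finrank_inf_eq, hU, finrank_fin_fun,
        max_eq_right hrs, gaussBinom_eq_gaussZ_sub hq, Nat.cast_sub hd, sub_sub_cancel,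
        gaussZ_natCast]
      ring_nf
    · rw [card_dI_eq_zero hU (by omega), gaussZ_of_lt (by omega)]
      simp
end

section
/- For all q, n, and 2 ≤ d ≤ n, if for each integer i with |i| ≤ z = ⌊⌊n/2⌋/d⌋ one takes a constant-dimension code C_i in E_{⌊n/2⌋ - id}(q,n) with minimum injection distance ⌈d/2⌉, then the union ∪_i C_i has minimum subspace distance at least d; hence A_S(q,n,d) ≥ ∑_{i=-z}^z A_C(q,n,⌊n/2⌋-id,⌈d/2⌉). -/
open Module

/-- Maximum cardinality of a subspace code in `E(q,n)` with minimum subspace distance `d`. -/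
noncomputable def AS (F : Type) [Field F] [Fintype F] (n d : ℕ) : ℕ :=
  sSup {m : ℕ | ∃ C : Set (Submodule F (Fin n → F)),
    m = C.ncard ∧ ∀ U ∈ C, ∀ V ∈ C, U ≠ V → d ≤ dS U V}

/-- Maximum cardinality of a constant-dimension code in `E_r(q,n)` with minimum injection
distance `d`. -/
noncomputable def AC (F : Type) [Field F] [Fintype F] (n r d : ℕ) : ℕ :=
  sSup {m : ℕ | ∃ C : Set (Submodule F (Fin n → F)),
    m = C.ncard ∧ (∀ U ∈ C, finrank F ↥U = r) ∧ ∀ U ∈ C, ∀ V ∈ C, U ≠ V → d ≤ dI U V}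

lemma my_ncard_biUnion {ι α : Type*} [Finite α] (s : Finset ι) (t : ι → Set α)
    (h : ∀ i ∈ s, ∀ j ∈ s, i ≠ j → Disjoint (t i) (t j)) :
    (⋃ i ∈ s, t i).ncard = ∑ i ∈ s, (t i).ncard := by
  classical
  induction s using Finset.induction with
  | empty => simp
  | @insert a s ha ih =>
    rw [Finset.set_biUnion_insert, Finset.sum_insert ha,
      Set.ncard_union_eq ?_ (Set.toFinite _) (Set.toFinite _),
      ih (fun i hi j hj hij => h i (Finset.mem_insert_of_mem hi) j (Finset.mem_insert_of_mem hj) hij)]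
    · rw [Set.disjoint_iUnion₂_right]
      intro i hi
      exact h a (Finset.mem_insert_self a s) i (Finset.mem_insert_of_mem hi)
        (fun e => ha (e ▸ hi))

lemma aux_min (F : Type) [Field F] (n d : ℕ) (hd : 2 ≤ d) (z : ℕ)
    (C : ℤ → Set (Submodule F (Fin n → F)))
    (hdim : ∀ i ∈ Finset.Icc (-(z : ℤ)) (z : ℤ),
      ∀ U ∈ C i, (finrank F ↥U : ℤ) = ((n / 2 : ℕ) : ℤ) - i * d)
    (hmin : ∀ i ∈ Finset.Icc (-(z : ℤ)) (z : ℤ),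
      ∀ U ∈ C i, ∀ V ∈ C i, U ≠ V → (d + 1) / 2 ≤ dI U V) :
    ∀ U ∈ ⋃ i ∈ Finset.Icc (-(z : ℤ)) (z : ℤ), C i,
      ∀ V ∈ ⋃ i ∈ Finset.Icc (-(z : ℤ)) (z : ℤ), C i, U ≠ V → d ≤ dS U V := by
  intro U hU V hV hUV
  simp only [Set.mem_iUnion, exists_prop] at hU hV
  obtain ⟨i, hi, hUi⟩ := hU
  obtain ⟨j, hj, hVj⟩ := hV
  have hsum := Submodule.finrank_sup_add_finrank_inf_eq U V
  have hka : finrank F ↥(U ⊓ V) ≤ finrank F ↥U := Submodule.finrank_mono inf_le_left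
  have hkb : finrank F ↥(U ⊓ V) ≤ finrank F ↥V := Submodule.finrank_mono inf_le_right
  by_cases hij : i = j
  · subst hij
    have hI := hmin i hi U hUi V hVj hUV
    have hab : (finrank F ↥U : ℤ) = (finrank F ↥V : ℤ) := by
      rw [hdim i hi U hUi, hdim i hi V hVj]
    unfold dI at hI
    unfold dS
    omega
  · have ha := hdim i hi U hUi
    have hb := hdim j hj V hVj
    have habs : (d : ℤ) ≤ (finrank F ↥U : ℤ) - finrank F ↥V ∨
        (d : ℤ) ≤ (finrank F ↥V : ℤ) - finrank F ↥U := by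
      have hab : (finrank F ↥U : ℤ) - finrank F ↥V = (j - i) * d := by
        rw [ha, hb]; ring
      rcases lt_or_gt_of_ne hij with h | h
      · left
        rw [hab]
        calc (d : ℤ) = 1 * d := (one_mul _).symm
        _ ≤ (j - i) * d := by
          apply mul_le_mul_of_nonneg_right (by omega) (by positivity)
      · right
        have : (finrank F ↥V : ℤ) - finrank F ↥U = (i - j) * d := by rw [ha, hb]; ring
        rw [this]
        calc (d : ℤ) = 1 * d := (one_mul _).symm
        _ ≤ (i - j) * d := by
          apply mul_le_mul_of_nonneg_right (by omega) (by positivity)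
    unfold dS
    omega

theorem union_of_CDCs_min_dS (F : Type) [Field F] [Fintype F] (n d : ℕ)
    (hd : 2 ≤ d) (hdn : d ≤ n)
    (C : ℤ → Set (Submodule F (Fin n → F)))
    (hdim : ∀ i ∈ Finset.Icc (-(((n / 2) / d : ℕ) : ℤ)) (((n / 2) / d : ℕ) : ℤ),
      ∀ U ∈ C i, (finrank F ↥U : ℤ) = ((n / 2 : ℕ) : ℤ) - i * d)
    (hmin : ∀ i ∈ Finset.Icc (-(((n / 2) / d : ℕ) : ℤ)) (((n / 2) / d : ℕ) : ℤ),
      ∀ U ∈ C i, ∀ V ∈ C i, U ≠ V → (d + 1) / 2 ≤ dI U V) :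
    (∀ U ∈ ⋃ i ∈ Finset.Icc (-(((n / 2) / d : ℕ) : ℤ)) (((n / 2) / d : ℕ) : ℤ), C i,
      ∀ V ∈ ⋃ i ∈ Finset.Icc (-(((n / 2) / d : ℕ) : ℤ)) (((n / 2) / d : ℕ) : ℤ), C i,
        U ≠ V → d ≤ dS U V) ∧
    (∑ i ∈ Finset.Icc (-(((n / 2) / d : ℕ) : ℤ)) (((n / 2) / d : ℕ) : ℤ),
        AC F n ((((n / 2 : ℕ) : ℤ) - i * d).toNat) ((d + 1) / 2)) ≤ AS F n d := by
  have hfin : Finite (Submodule F (Fin n → F)) :=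
    Finite.of_injective (fun U => (U : Set (Fin n → F))) SetLike.coe_injective
  constructor
  · exact aux_min F n d hd ((n / 2) / d) C hdim hmin
  · -- bounds
    have hbd : ∀ (S : Set ℕ), (∀ m ∈ S, ∃ C : Set (Submodule F (Fin n → F)), m = C.ncard) →
        BddAbove S := by
      intro S hS
      refine ⟨Nat.card (Submodule F (Fin n → F)), fun m hm => ?_⟩
      obtain ⟨C, hC⟩ := hS m hm
      rw [hC, ← Set.ncard_univ]
      exact Set.ncard_le_ncard (Set.subset_univ _) Set.finite_univ
    have hach : ∀ i : ℤ, ∃ Ci : Set (Submodule F (Fin n → F)),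
        AC F n ((((n / 2 : ℕ) : ℤ) - i * d).toNat) ((d + 1) / 2) = Ci.ncard ∧
        (∀ U ∈ Ci, finrank F ↥U = (((n / 2 : ℕ) : ℤ) - i * d).toNat) ∧
        ∀ U ∈ Ci, ∀ V ∈ Ci, U ≠ V → (d + 1) / 2 ≤ dI U V := by
      intro i
      have := Nat.sSup_mem (s := {m : ℕ | ∃ C : Set (Submodule F (Fin n → F)),
          m = C.ncard ∧ (∀ U ∈ C, finrank F ↥U = (((n / 2 : ℕ) : ℤ) - i * d).toNat) ∧
          ∀ U ∈ C, ∀ V ∈ C, U ≠ V → (d + 1) / 2 ≤ dI U V})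
        ⟨0, ⟨∅, by simp⟩⟩ (hbd _ (fun m ⟨C, hC, _⟩ => ⟨C, hC⟩))
      exact this
    choose D hD1 hD2 hD3 using hach
    set z : ℕ := (n / 2) / d with hz
    set s : Finset ℤ := Finset.Icc (-(z : ℤ)) (z : ℤ) with hs
    have hnonneg : ∀ i ∈ s, (0 : ℤ) ≤ ((n / 2 : ℕ) : ℤ) - i * d := by
      intro i hi
      rw [hs, Finset.mem_Icc] at hi
      have h1 : i * d ≤ (z : ℤ) * d :=
        mul_le_mul_of_nonneg_right hi.2 (by positivity)
      have h2 : (z : ℤ) * d ≤ ((n / 2 : ℕ) : ℤ) := by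
        rw [hz]
        exact_mod_cast Nat.div_mul_le_self (n / 2) d
      omega
    have hdim' : ∀ i ∈ s, ∀ U ∈ D i,
        (finrank F ↥U : ℤ) = ((n / 2 : ℕ) : ℤ) - i * d := by
      intro i hi U hU
      rw [hD2 i U hU, Int.toNat_of_nonneg (hnonneg i hi)]
    have hdisj : ∀ i ∈ s, ∀ j ∈ s, i ≠ j → Disjoint (D i) (D j) := by
      intro i hi j hj hij
      rw [Set.disjoint_left]
      intro U hUi hUj
      have h1 := hdim' i hi U hUi
      have h2 := hdim' j hj U hUj
      have : i * d = j * d := by omega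
      have hd0 : (d : ℤ) ≠ 0 := by exact_mod_cast (by omega : d ≠ 0)
      exact hij (mul_right_cancel₀ hd0 this)
    have hcard : (⋃ i ∈ s, D i).ncard = ∑ i ∈ s, (D i).ncard :=
      my_ncard_biUnion s D hdisj
    have hdist := aux_min F n d hd z D hdim' (fun i hi => hD3 i)
    calc (∑ i ∈ s, AC F n ((((n / 2 : ℕ) : ℤ) - i * d).toNat) ((d + 1) / 2))
        = ∑ i ∈ s, (D i).ncard := Finset.sum_congr rfl (fun i _ => hD1 i)
      _ = (⋃ i ∈ s, D i).ncard := hcard.symm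
      _ ≤ AS F n d := by
        unfold AS
        apply le_csSup
        · exact hbd _ (fun m hm => by obtain ⟨C, hC, -⟩ := hm; exact ⟨C, hC⟩)
        · exact ⟨⋃ i ∈ s, D i, rfl, hdist⟩
end

section
/- For 2 ≤ d ≤ ⌊n/2⌋: A_S(q,n,2d-1) ≤ A_I(q,n,d) ≤ A_S(q,n,d); furthermore, if d ≥ n/3, then any code with codeword dimensions in Q_d = {d,...,n-d} and minimum injection distance d has minimum subspace distance at least 4d-n, so A_I(q,n,d) ≤ A_S(q,n,4d-n,Q_d) + 2. -/
open Module

/-- Maximum cardinality of a subspace code with minimum subspace distance `d` and codeword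
dimensions restricted to `J`. -/
noncomputable def ASJ (F : Type) [Field F] [Fintype F] (n d : ℕ) (J : Set ℕ) : ℕ :=
  sSup {m : ℕ | ∃ C : Set (Submodule F (Fin n → F)),
    m = C.ncard ∧ (∀ U ∈ C, finrank F ↥U ∈ J) ∧ ∀ U ∈ C, ∀ V ∈ C, U ≠ V → d ≤ dS U V}

/-- Maximum cardinality of a subspace code in `E(q,n)` with minimum injection distance `d`. -/
noncomputable def AI (F : Type) [Field F] [Fintype F] (n d : ℕ) : ℕ :=
  sSup {m : ℕ | ∃ C : Set (Submodule F (Fin n → F)),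
    m = C.ncard ∧ ∀ U ∈ C, ∀ V ∈ C, U ≠ V → d ≤ dI U V}

section aux

variable {F : Type} [Field F] [Fintype F] {n : ℕ}

set_option linter.unusedSectionVars false in
lemma dims_facts (U V : Submodule F (Fin n → F)) :
    finrank F ↥(U ⊓ V) ≤ finrank F ↥U ∧ finrank F ↥(U ⊓ V) ≤ finrank F ↥V ∧
    finrank F ↥(U ⊔ V) + finrank F ↥(U ⊓ V) = finrank F ↥U + finrank F ↥V ∧
    finrank F ↥(U ⊔ V) ≤ n := by
  refine ⟨Submodule.finrank_mono inf_le_left, Submodule.finrank_mono inf_le_right,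
    Submodule.finrank_sup_add_finrank_inf_eq U V, ?_⟩
  have := Submodule.finrank_le (U ⊔ V)
  rwa [Module.finrank_fin_fun] at this

lemma bdd_aux (S : Set ℕ)
    (hS : ∀ m ∈ S, ∃ C : Set (Submodule F (Fin n → F)), m = C.ncard) :
    BddAbove S := by
  refine ⟨Nat.card (Submodule F (Fin n → F)), fun m hm => ?_⟩
  obtain ⟨C, rfl⟩ := hS m hm
  calc C.ncard ≤ (Set.univ : Set (Submodule F (Fin n → F))).ncard :=
        Set.ncard_le_ncard (Set.subset_univ C) Set.finite_univ
    _ = _ := Set.ncard_univ _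

end aux

theorem AS_AI_relations (F : Type) [Field F] [Fintype F] (n d : ℕ)
    (hd : 2 ≤ d) (hdn : d ≤ n / 2) :
    (AS F n (2 * d - 1) ≤ AI F n d) ∧
    (AI F n d ≤ AS F n d) ∧
    (n ≤ 3 * d →
      ((∀ C : Set (Submodule F (Fin n → F)),
          (∀ U ∈ C, finrank F ↥U ∈ Set.Icc d (n - d)) →
          (∀ U ∈ C, ∀ V ∈ C, U ≠ V → d ≤ dI U V) →
          (∀ U ∈ C, ∀ V ∈ C, U ≠ V → 4 * d - n ≤ dS U V)) ∧
        AI F n d ≤ ASJ F n (4 * d - n) (Set.Icc d (n - d)) + 2)) := by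
  have hdn' : 2 * d ≤ n := by omega
  -- key pointwise lemmas
  have key1 : ∀ U V : Submodule F (Fin n → F), dS U V ≤ 2 * dI U V := by
    intro U V
    obtain ⟨h1, h2, h3, h4⟩ := dims_facts U V
    unfold dS dI
    omega
  have key2 : ∀ U V : Submodule F (Fin n → F), dI U V ≤ dS U V := by
    intro U V
    obtain ⟨h1, h2, h3, h4⟩ := dims_facts U V
    unfold dS dI
    omega
  have key3 : ∀ U V : Submodule F (Fin n → F),
      d ≤ dI U V → finrank F ↥U ∈ Set.Icc d (n - d) → finrank F ↥V ∈ Set.Icc d (n - d) →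
      4 * d - n ≤ dS U V := by
    intro U V hI hU hV
    obtain ⟨h1, h2, h3, h4⟩ := dims_facts U V
    simp only [Set.mem_Icc] at hU hV
    unfold dS dI at *
    omega
  have keyL : ∀ U V : Submodule F (Fin n → F),
      finrank F ↥U < d → finrank F ↥V < d → dI U V < d := by
    intro U V hU hV
    obtain ⟨h1, h2, h3, h4⟩ := dims_facts U V
    unfold dI
    omega
  have keyH : ∀ U V : Submodule F (Fin n → F),
      n - d < finrank F ↥U → n - d < finrank F ↥V → dI U V < d := by
    intro U V hU hV
    obtain ⟨h1, h2, h3, h4⟩ := dims_facts U V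
    unfold dI
    omega
  have hne : ∀ d' : ℕ, (0 : ℕ) ∈ {m : ℕ | ∃ C : Set (Submodule F (Fin n → F)),
      m = C.ncard ∧ ∀ U ∈ C, ∀ V ∈ C, U ≠ V → d' ≤ dI U V} := by
    intro d'; exact ⟨∅, by simp⟩
  refine ⟨?_, ?_, ?_⟩
  · -- AS (2d-1) ≤ AI d
    refine csSup_le ⟨0, ∅, by simp⟩ ?_
    rintro m ⟨C, rfl, hC⟩
    refine le_csSup ?_ ⟨C, rfl, fun U hU V hV hUV => ?_⟩
    · exact bdd_aux _ (fun m hm => hm.imp fun C h => h.1)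
    · have := hC U hU V hV hUV
      have := key1 U V
      omega
  · -- AI d ≤ AS d
    refine csSup_le ⟨0, ∅, by simp⟩ ?_
    rintro m ⟨C, rfl, hC⟩
    refine le_csSup ?_ ⟨C, rfl, fun U hU V hV hUV => ?_⟩
    · exact bdd_aux _ (fun m hm => hm.imp fun C h => h.1)
    · exact le_trans (hC U hU V hV hUV) (key2 U V)
  · intro h3d
    refine ⟨fun C hdim hI U hU V hV hUV => key3 U V (hI U hU V hV hUV) (hdim U hU) (hdim V hV), ?_⟩
    refine csSup_le ⟨0, ∅, by simp⟩ ?_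
    rintro m ⟨C, rfl, hC⟩
    set L : Set (Submodule F (Fin n → F)) := {U ∈ C | finrank F ↥U < d} with hL
    set H : Set (Submodule F (Fin n → F)) := {U ∈ C | n - d < finrank F ↥U} with hH
    set C' : Set (Submodule F (Fin n → F)) := {U ∈ C | finrank F ↥U ∈ Set.Icc d (n - d)}
      with hC'
    have hsplit : C = C' ∪ (L ∪ H) := by
      ext U
      simp only [hC', hL, hH, Set.mem_union, Set.mem_setOf_eq, Set.mem_Icc]
      constructor
      · intro hU
        by_cases h1 : finrank F ↥U < d
        · tauto
        · by_cases h2 : n - d < finrank F ↥U <;> [tauto; exact Or.inl ⟨hU, by omega, by omega⟩]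
      · tauto
    have hLcard : L.ncard ≤ 1 := by
      rw [Set.ncard_le_one (Set.toFinite L)]
      rintro a ⟨ha, ha'⟩ b ⟨hb, hb'⟩
      by_contra hab
      have := hC a ha b hb hab
      have := keyL a b ha' hb'
      omega
    have hHcard : H.ncard ≤ 1 := by
      rw [Set.ncard_le_one (Set.toFinite H)]
      rintro a ⟨ha, ha'⟩ b ⟨hb, hb'⟩
      by_contra hab
      have := hC a ha b hb hab
      have := keyH a b ha' hb'
      omega
    have hC'le : C'.ncard ≤ ASJ F n (4 * d - n) (Set.Icc d (n - d)) := by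
      refine le_csSup ?_ ⟨C', rfl, fun U hU => hU.2, fun U hU V hV hUV => ?_⟩
      · exact bdd_aux _ (fun m hm => hm.imp fun C h => h.1)
      · exact key3 U V (hC U hU.1 V hV.1 hUV) hU.2 hV.2
    calc C.ncard = (C' ∪ (L ∪ H)).ncard := by rw [← hsplit]
      _ ≤ C'.ncard + (L ∪ H).ncard := Set.ncard_union_le _ _
      _ ≤ C'.ncard + (L.ncard + H.ncard) := by
          exact Nat.add_le_add_left (Set.ncard_union_le _ _) _
      _ ≤ ASJ F n (4 * d - n) (Set.Icc d (n - d)) + 2 := by omega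
end

section
/- Fix a hyperplane W of GF(q)^n and a puncturing map H_W from subspaces of GF(q)^n to subspaces of W defined by H_W({0}) = {0} and, for dim V = r > 0, H_W(V) a fixed (r-1)-dimensional subspace of V ∩ W. Then for all subspaces U, V: d_I(H_W(U), H_W(V)) ≥ d_I(U,V) - 1. Consequently, A_I(q,n,d) ≤ A_I(q,n-1,d-1) for d ≥ 2, and iterating, A_I(q,n,d) ≤ ∑_{r=0}^{n-d+1} [n-d+1 choose r]_q. -/
open Module

set_option linter.unusedSectionVars false

section Aux
variable {F : Type} [Field F] [Fintype F] {m : ℕ}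

lemma finite_submodule : Finite (Submodule F (Fin m → F)) :=
  Finite.of_injective (fun X => (X : Set (Fin m → F))) SetLike.coe_injective

lemma dI_self (U : Submodule F (Fin m → F)) : dI U U = 0 := by
  unfold dI; rw [inf_idem]; omega

lemma dI_bot_left (V : Submodule F (Fin m → F)) : dI ⊥ V = finrank F ↥V := by
  unfold dI; rw [bot_inf_eq, finrank_bot]; omega

lemma dI_bot_right (V : Submodule F (Fin m → F)) : dI V ⊥ = finrank F ↥V := by
  unfold dI; rw [inf_bot_eq, finrank_bot]; omega

/-- Part 1: puncturing decreases the injection distance by at most one. -/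
lemma dI_puncture (W : Submodule F (Fin m → F))
    (H : Submodule F (Fin m → F) → Submodule F (Fin m → F))
    (hH0 : H ⊥ = ⊥)
    (hH : ∀ V : Submodule F (Fin m → F), V ≠ ⊥ →
      H V ≤ V ⊓ W ∧ finrank F ↥(H V) = finrank F ↥V - 1)
    (U V : Submodule F (Fin m → F)) : dI U V - 1 ≤ dI (H U) (H V) := by
  by_cases hU : U = ⊥
  · subst hU
    rw [hH0, dI_bot_left, dI_bot_left]
    by_cases hV : V = ⊥
    · subst hV; rw [hH0, finrank_bot]
    · rw [(hH V hV).2]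
  · by_cases hV : V = ⊥
    · subst hV
      rw [hH0, dI_bot_right, dI_bot_right, (hH U hU).2]
    · have hU2 := hH U hU
      have hV2 := hH V hV
      have h1 : 1 ≤ finrank F U := by
        rcases Nat.eq_zero_or_pos (finrank F ↥U) with h | h
        · exact absurd (Submodule.finrank_eq_zero.mp h) hU
        · omega
      have h1' : 1 ≤ finrank F V := by
        rcases Nat.eq_zero_or_pos (finrank F ↥V) with h | h
        · exact absurd (Submodule.finrank_eq_zero.mp h) hV
        · omega
      have hle : H U ⊓ H V ≤ U ⊓ V :=
        inf_le_inf (hU2.1.trans inf_le_left) (hV2.1.trans inf_le_left)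
      have hmono : finrank F ↥(H U ⊓ H V) ≤ finrank F ↥(U ⊓ V) :=
        Submodule.finrank_mono hle
      unfold dI
      rw [hU2.2, hV2.2]
      omega

lemma card_fiber (r : ℕ) (X : Submodule F (Fin m → F)) (hX : finrank F ↥X = r) :
    Nat.card {s : Fin r → (Fin m → F) // LinearIndependent F s ∧ Set.range s ⊆ X} =
      ∏ i ∈ Finset.range r, (Fintype.card F ^ r - Fintype.card F ^ i) := by
  classical
  have e : {t : Fin r → ↥X // LinearIndependent F t} ≃
      {s : Fin r → (Fin m → F) // LinearIndependent F s ∧ Set.range s ⊆ X} :=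
  { toFun := fun t => ⟨fun i => (t.1 i : Fin m → F),
      t.2.map' X.subtype (Submodule.ker_subtype X),
      by rintro x ⟨i, rfl⟩; exact (t.1 i).2⟩
    invFun := fun s => ⟨fun i => ⟨s.1 i, s.2.2 ⟨i, rfl⟩⟩,
      LinearIndependent.of_comp X.subtype (by exact s.2.1)⟩
    left_inv := fun t => rfl
    right_inv := fun s => rfl }
  rw [← Nat.card_congr e]
  have hr : r ≤ finrank F ↥X := hX.ge
  rw [card_linearIndependent hr, hX]
  exact Fin.prod_univ_eq_prod_range (fun i => Fintype.card F ^ r - Fintype.card F ^ i) r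

lemma card_grass (r : ℕ) (hr : r ≤ m) :
    Nat.card {X : Submodule F (Fin m → F) // finrank F ↥X = r} *
        ∏ i ∈ Finset.range r, (Fintype.card F ^ r - Fintype.card F ^ i) =
      ∏ i ∈ Finset.range r, (Fintype.card F ^ m - Fintype.card F ^ i) := by
  classical
  haveI : Finite (Submodule F (Fin m → F)) := finite_submodule
  haveI : Fintype (Submodule F (Fin m → F)) := Fintype.ofFinite _
  have htot : Nat.card {s : Fin r → (Fin m → F) // LinearIndependent F s}
      = ∏ i ∈ Finset.range r, (Fintype.card F ^ m - Fintype.card F ^ i) := by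
    have hle : r ≤ finrank F (Fin m → F) := by rw [Module.finrank_fin_fun]; exact hr
    rw [card_linearIndependent hle, Module.finrank_fin_fun]
    exact Fin.prod_univ_eq_prod_range (fun i => Fintype.card F ^ m - Fintype.card F ^ i) r
  set T : Finset (Fin r → Fin m → F) := Finset.univ.filter (fun s => LinearIndependent F s)
    with hT
  set G : Finset (Submodule F (Fin m → F)) := Finset.univ.filter (fun X => finrank F ↥X = r)
    with hG
  have hmem : ∀ s ∈ T, Submodule.span F (Set.range s) ∈ G := by
    intro s hs
    simp only [hT, Finset.mem_filter, Finset.mem_univ, true_and] at hs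
    simp only [hG, Finset.mem_filter, Finset.mem_univ, true_and]
    rw [finrank_span_eq_card hs, Fintype.card_fin]
  have hsplit := Finset.card_eq_sum_card_fiberwise hmem
  have hfib : ∀ X ∈ G, (T.filter (fun s => Submodule.span F (Set.range s) = X)).card
      = ∏ i ∈ Finset.range r, (Fintype.card F ^ r - Fintype.card F ^ i) := by
    intro X hX
    simp only [hG, Finset.mem_filter, Finset.mem_univ, true_and] at hX
    have hset : (T.filter (fun s => Submodule.span F (Set.range s) = X))
        = Finset.univ.filter
            (fun s : Fin r → Fin m → F => LinearIndependent F s ∧ Set.range s ⊆ X) := by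
      ext s
      simp only [hT, Finset.mem_filter, Finset.mem_univ, true_and, Finset.filter_filter]
      constructor
      · rintro ⟨hind, hspan⟩
        exact ⟨hind, hspan ▸ Submodule.subset_span⟩
      · rintro ⟨hind, hsub⟩
        refine ⟨hind, Submodule.eq_of_le_of_finrank_eq (Submodule.span_le.mpr hsub) ?_⟩
        rw [finrank_span_eq_card hind, Fintype.card_fin, hX]
    rw [hset, ← Fintype.card_subtype, ← Nat.card_eq_fintype_card, card_fiber r X hX]
  rw [Finset.sum_congr rfl hfib, Finset.sum_const, smul_eq_mul] at hsplit
  have hT' : Nat.card {s : Fin r → Fin m → F // LinearIndependent F s} = T.card := by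
    rw [Nat.card_eq_fintype_card, hT, ← Fintype.card_subtype]
  have hG' : Nat.card {X : Submodule F (Fin m → F) // finrank F ↥X = r} = G.card := by
    rw [Nat.card_eq_fintype_card, hG, ← Fintype.card_subtype]
  rw [hG', ← hsplit, ← hT', htot]

lemma card_grass_real (r : ℕ) (hr : r ≤ m) :
    (Nat.card {X : Submodule F (Fin m → F) // finrank F ↥X = r} : ℝ) =
      gaussBinom (Fintype.card F) m r := by
  have hq : 1 < Fintype.card F := Fintype.one_lt_card
  have key := card_grass (F := F) (m := m) r hr
  set q := Fintype.card F
  have hcast : ∀ n : ℕ, ∀ i ∈ Finset.range r, i ≤ n →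
      (((q ^ n - q ^ i : ℕ) : ℝ)) = (q:ℝ)^n - (q:ℝ)^i := by
    intro n i _ hin
    rw [Nat.cast_sub (Nat.pow_le_pow_right (le_of_lt hq) hin)]
    push_cast; ring
  have keyR : (Nat.card {X : Submodule F (Fin m → F) // finrank F ↥X = r} : ℝ) *
      ∏ i ∈ Finset.range r, ((q:ℝ)^r - (q:ℝ)^i) =
      ∏ i ∈ Finset.range r, ((q:ℝ)^m - (q:ℝ)^i) := by
    have := congrArg (fun k : ℕ => (k : ℝ)) key
    simp only [Nat.cast_mul, Nat.cast_prod] at this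
    rw [Finset.prod_congr rfl (fun i hi => hcast r i hi (Nat.le_of_lt (Finset.mem_range.mp hi))),
      Finset.prod_congr rfl (fun i hi => hcast m i hi
        ((Nat.le_of_lt (Finset.mem_range.mp hi)).trans hr))] at this
    exact this
  have hden : ∏ i ∈ Finset.range r, ((q:ℝ)^r - (q:ℝ)^i) ≠ 0 := by
    apply Finset.prod_ne_zero_iff.mpr
    intro i hi
    have : (q:ℝ)^i < (q:ℝ)^r := by
      apply pow_lt_pow_right₀ (by exact_mod_cast hq) (Finset.mem_range.mp hi)
    exact sub_ne_zero.mpr (ne_of_gt this)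
  rw [gaussBinom, Finset.prod_div_distrib, eq_div_iff hden]
  exact keyR

lemma card_submodule_real :
    (Nat.card (Submodule F (Fin m → F)) : ℝ) =
      ∑ r ∈ Finset.range (m + 1), gaussBinom (Fintype.card F) m r := by
  classical
  haveI : Finite (Submodule F (Fin m → F)) := finite_submodule
  haveI : Fintype (Submodule F (Fin m → F)) := Fintype.ofFinite _
  have hsplit : (Finset.univ : Finset (Submodule F (Fin m → F))).card =
      ∑ r ∈ Finset.range (m + 1),
        (Finset.univ.filter (fun X : Submodule F (Fin m → F) => finrank F ↥X = r)).card := by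
    apply Finset.card_eq_sum_card_fiberwise
    intro X _
    refine Finset.mem_range.mpr (Nat.lt_succ_of_le ?_)
    have := Submodule.finrank_le X
    rwa [Module.finrank_fin_fun] at this
  rw [Nat.card_eq_fintype_card, ← Finset.card_univ, hsplit, Nat.cast_sum]
  refine Finset.sum_congr rfl (fun r hr => ?_)
  rw [← Fintype.card_subtype, ← Nat.card_eq_fintype_card,
    card_grass_real r (Nat.lt_succ_iff.mp (Finset.mem_range.mp hr))]

lemma AISet_nonempty (n d : ℕ) : Set.Nonempty {m : ℕ | ∃ C : Set (Submodule F (Fin n → F)),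
    m = C.ncard ∧ ∀ U ∈ C, ∀ V ∈ C, U ≠ V → d ≤ dI U V} :=
  ⟨0, ∅, by simp, by simp⟩

lemma AISet_bdd (n d : ℕ) : ∀ k ∈ {m : ℕ | ∃ C : Set (Submodule F (Fin n → F)),
    m = C.ncard ∧ ∀ U ∈ C, ∀ V ∈ C, U ≠ V → d ≤ dI U V},
    k ≤ Nat.card (Submodule F (Fin n → F)) := by
  haveI : Finite (Submodule F (Fin n → F)) := finite_submodule
  rintro k ⟨C, rfl, -⟩
  rw [← Set.ncard_univ]
  exact Set.ncard_le_ncard (Set.subset_univ _) Set.finite_univ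

lemma AI_le_card (n d : ℕ) : AI F n d ≤ Nat.card (Submodule F (Fin n → F)) :=
  csSup_le (AISet_nonempty n d) (AISet_bdd n d)

lemma exists_hyperplane (hm : 1 ≤ m) :
    ∃ W : Submodule F (Fin m → F), finrank F ↥W = m - 1 := by
  set π : (Fin m → F) →ₗ[F] F := LinearMap.proj ⟨0, hm⟩
  have hsurj : Function.Surjective π := fun x =>
    ⟨Function.update 0 ⟨0, hm⟩ x, by simp [π]⟩
  refine ⟨LinearMap.ker π, ?_⟩
  have h1 := LinearMap.finrank_range_add_finrank_ker π
  rw [LinearMap.range_eq_top.mpr hsurj] at h1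
  have h2 : finrank F (⊤ : Submodule F F) = 1 := by
    rw [finrank_top, finrank_self]
  rw [h2, Module.finrank_fin_fun] at h1
  omega

lemma exists_puncture (W : Submodule F (Fin m → F)) (hW : finrank F ↥W = m - 1)
    (hm : 1 ≤ m) (V : Submodule F (Fin m → F)) :
    ∃ X : Submodule F (Fin m → F), X ≤ V ⊓ W ∧ finrank F ↥X = finrank F ↥V - 1 := by
  by_cases hV : V = ⊥
  · refine ⟨⊥, bot_le, ?_⟩
    subst hV
    rw [finrank_bot]
  · have hdim : finrank F ↥V - 1 ≤ finrank F ↥(V ⊓ W) := by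
      have h1 := Submodule.finrank_sup_add_finrank_inf_eq V W
      have h2 : finrank F ↥(V ⊔ W) ≤ m := by
        have := Submodule.finrank_le (V ⊔ W)
        rwa [Module.finrank_fin_fun] at this
      have h3 : finrank F ↥V ≤ m := by
        have := Submodule.finrank_le V
        rwa [Module.finrank_fin_fun] at this
      rw [hW] at h1
      omega
    obtain ⟨f, hf⟩ := exists_linearIndependent_of_le_finrank (R := F) (M := ↥(V ⊓ W)) hdim
    refine ⟨(Submodule.span F (Set.range f)).map (V ⊓ W).subtype, ?_, ?_⟩
    · exact Submodule.map_subtype_le _ _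
    · rw [Submodule.finrank_map_subtype_eq, finrank_span_eq_card hf, Fintype.card_fin]

lemma dI_transfer (W : Submodule F (Fin m → F))
    (e : ↥W ≃ₗ[F] (Fin (m - 1) → F)) (X Y : Submodule F (Fin m → F))
    (hX : X ≤ W) (hY : Y ≤ W) :
    dI ((X.comap W.subtype).map e.toLinearMap) ((Y.comap W.subtype).map e.toLinearMap) =
      dI X Y := by
  have hfr : ∀ Z : Submodule F (Fin m → F), Z ≤ W →
      finrank F ↥((Z.comap W.subtype).map e.toLinearMap) = finrank F ↥Z := by
    intro Z hZ
    rw [LinearEquiv.finrank_map_eq e]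
    exact LinearEquiv.finrank_eq (Submodule.comapSubtypeEquivOfLe hZ)
  have hinf : ((X.comap W.subtype).map e.toLinearMap) ⊓ ((Y.comap W.subtype).map e.toLinearMap)
      = (((X ⊓ Y).comap W.subtype).map e.toLinearMap) := by
    rw [Submodule.comap_inf]
    exact (Submodule.map_inf e.toLinearMap e.injective).symm
  unfold dI
  rw [hfr X hX, hfr Y hY, hinf, hfr (X ⊓ Y) (inf_le_left.trans hX)]

/-- Part 2 (general form): one puncturing step. -/
lemma AI_step (m d : ℕ) (hm : 1 ≤ m) (hd : 2 ≤ d) :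
    AI F m d ≤ AI F (m - 1) (d - 1) := by
  classical
  obtain ⟨W, hW⟩ := exists_hyperplane (F := F) hm
  choose Hfun hH1 hH2 using exists_puncture (F := F) W hW hm
  set H : Submodule F (Fin m → F) → Submodule F (Fin m → F) :=
    fun V => if V = ⊥ then ⊥ else Hfun V with hHdef
  have hH0 : H ⊥ = ⊥ := if_pos rfl
  have hH : ∀ V : Submodule F (Fin m → F), V ≠ ⊥ →
      H V ≤ V ⊓ W ∧ finrank F ↥(H V) = finrank F ↥V - 1 := by
    intro V hV
    have hHV : H V = Hfun V := if_neg hV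
    rw [hHV]
    exact ⟨hH1 V, hH2 V⟩
  have hHW : ∀ V, H V ≤ W := by
    intro V
    by_cases hV : V = ⊥
    · subst hV; rw [hH0]; exact bot_le
    · exact (hH V hV).1.trans inf_le_right
  have he : finrank F ↥W = finrank F (Fin (m - 1) → F) := by
    rw [hW, Module.finrank_fin_fun]
  let e : ↥W ≃ₗ[F] (Fin (m - 1) → F) := LinearEquiv.ofFinrankEq _ _ he
  set Φ : Submodule F (Fin m → F) → Submodule F (Fin (m - 1) → F) :=
    fun X => (X.comap W.subtype).map e.toLinearMap with hΦ
  apply csSup_le_csSup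
  · exact ⟨Nat.card (Submodule F (Fin (m - 1) → F)), fun k hk => AISet_bdd (m - 1) (d - 1) k hk⟩
  · exact AISet_nonempty m d
  · rintro k ⟨C, rfl, hC⟩
    have hdist : ∀ U ∈ C, ∀ V ∈ C, U ≠ V → d - 1 ≤ dI (Φ (H U)) (Φ (H V)) := by
      intro U hU V hV hUV
      rw [hΦ]
      rw [dI_transfer W e (H U) (H V) (hHW U) (hHW V)]
      calc d - 1 ≤ dI U V - 1 := Nat.sub_le_sub_right (hC U hU V hV hUV) 1
        _ ≤ dI (H U) (H V) := dI_puncture W H hH0 hH U V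
    have hinj : Set.InjOn (fun U => Φ (H U)) C := by
      intro U hU V hV hEq
      by_contra hne'
      have h1 := hdist U hU V hV hne'
      have hEq' : Φ (H U) = Φ (H V) := hEq
      rw [hEq', dI_self] at h1
      omega
    refine ⟨(fun U => Φ (H U)) '' C, (Set.ncard_image_of_injOn hinj).symm, ?_⟩
    rintro A ⟨U, hU, rfl⟩ B ⟨V, hV, rfl⟩ hAB
    exact hdist U hU V hV (fun h => hAB (by rw [h]))

lemma AI_iter (d : ℕ) (hd : 1 ≤ d) :
    ∀ n : ℕ, d ≤ n → AI F n d ≤ AI F (n - d + 1) 1 := by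
  induction d, hd using Nat.le_induction with
  | base => intro n hn; rw [Nat.sub_add_cancel hn]
  | succ d hd ih =>
    intro n hn
    have h1 : AI F n (d + 1) ≤ AI F (n - 1) d := by
      have := AI_step (F := F) n (d + 1) (by omega) (by omega)
      simpa using this
    refine h1.trans ?_
    have h2 := ih (n - 1) (by omega)
    have h3 : n - 1 - d + 1 = n - (d + 1) + 1 := by omega
    rwa [h3] at h2

end Aux

theorem puncturing_and_singleton_bound (F : Type) [Field F] [Fintype F] (n : ℕ)
    (hn : 1 ≤ n) (W : Submodule F (Fin n → F)) (hW : finrank F ↥W = n - 1)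
    (H : Submodule F (Fin n → F) → Submodule F (Fin n → F))
    (hH0 : H ⊥ = ⊥)
    (hH : ∀ V : Submodule F (Fin n → F), V ≠ ⊥ →
      H V ≤ V ⊓ W ∧ finrank F ↥(H V) = finrank F ↥V - 1) :
    (∀ U V : Submodule F (Fin n → F), dI U V - 1 ≤ dI (H U) (H V)) ∧
    (∀ d : ℕ, 2 ≤ d → AI F n d ≤ AI F (n - 1) (d - 1)) ∧
    (∀ d : ℕ, 2 ≤ d → d ≤ n / 2 →
      (AI F n d : ℝ) ≤
        ∑ r ∈ Finset.range (n - d + 2), gaussBinom (Fintype.card F) (n - d + 1) r) := by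
  refine ⟨fun U V => dI_puncture W H hH0 hH U V,
    fun d hd => AI_step n d hn hd, ?_⟩
  intro d hd hdn
  have hdn' : d ≤ n := le_trans hdn (Nat.div_le_self n 2)
  have h1 : AI F n d ≤ AI F (n - d + 1) 1 := AI_iter d (by omega) n hdn'
  have h2 : AI F (n - d + 1) 1 ≤ Nat.card (Submodule F (Fin (n - d + 1) → F)) :=
    AI_le_card _ _
  have h3 : (AI F n d : ℝ) ≤ (Nat.card (Submodule F (Fin (n - d + 1) → F)) : ℝ) := by
    exact_mod_cast h1.trans h2
  have h4 := card_submodule_real (F := F) (m := n - d + 1)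
  have h5 : n - d + 2 = (n - d + 1) + 1 := by omega
  rw [h5]
  rw [h4] at h3
  exact h3
end
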